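/- arXiv:1611.07382 — 14 statements merged into one kernel-verified Lean document; each statement's English description precedes it below -/
import Mathlib

section
/- Let X be a symmetric real n×n matrix with diag(X) = e and 2X − J positive semidefinite. Then 0 ≤ X_{ij} ≤ 1 for all i, j; in particular the entrywise nonnegativity constraint X ≥ 0 is redundant in the order-n relaxation min (1/2)tr(LX) subject to diag(X) = e, tr(JX) = m1² + m2², 2X − J ⪰ 0. -/
open Matrix BigOperators

/-- If `X` is symmetric with `diag X = e` and `2X - J ⪰ 0`, then
`0 ≤ X i j ≤ 1` for all `i, j`; in particular the entrywise nonnegativity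
constraint is redundant in the order-`n` relaxation (2). -/
theorem entries_nonneg_of_diag_one_and_psd
    (n : ℕ) (hn : 0 < n)
    (e : Fin n → ℝ) (he : e = fun _ => 1)
    (J : Matrix (Fin n) (Fin n) ℝ) (hJ : J = Matrix.of fun _ _ => 1)
    (X : Matrix (Fin n) (Fin n) ℝ) (hX : X.IsSymm)
    (hdiag : X.diag = e)
    (hpsd : ((2 : ℝ) • X - J).PosSemidef) :
    ∀ i j, 0 ≤ X i j ∧ X i j ≤ 1 := by
  intro i j
  set M : Matrix (Fin n) (Fin n) ℝ := (2 : ℝ) • X - J with hM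
  have hdiag' : ∀ k, X k k = 1 := by
    intro k
    have := congrFun hdiag k
    simpa [Matrix.diag, he] using this
  have hMsym : ∀ a b, M a b = M b a := by
    intro a b
    have := hX.apply a b
    simp [hM, hJ, Matrix.sub_apply, Matrix.smul_apply, this]
  have hMd : ∀ k, M k k = 1 := by
    intro k
    simp [hM, hJ, Matrix.sub_apply, Matrix.smul_apply, hdiag' k]
    ring
  by_cases hij : i = j
  · subst hij
    simp [hdiag' i]
  · have key : ∀ (s : ℝ), s * s = 1 → 0 ≤ 2 + 2 * s * M i j := by
      intro s hs
      have := (Matrix.posSemidef_iff_dotProduct_mulVec.mp hpsd).2 (Pi.single i 1 + Pi.single j s)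
      have hcalc : (Pi.single i 1 + Pi.single j s) ⬝ᵥ
          (M *ᵥ (Pi.single i 1 + Pi.single j s))
          = M i i + s * M i j + s * M j i + s * s * M j j := by
        simp [Matrix.mulVec_add, dotProduct_add, add_dotProduct,
          Matrix.mulVec_single, Pi.single_apply, hij, Ne.symm hij]
        ring
      simp only [star_trivial] at this
      rw [hcalc] at this
      have := this
      rw [hMd i, hMd j, hMsym j i] at this
      nlinarith [this, hs]
    constructor
    · have h1 := key 1 (by norm_num)
      have hMij : M i j = 2 * X i j - 1 := by
        simp [hM, hJ, Matrix.sub_apply, Matrix.smul_apply]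
      nlinarith
    · have h2 := key (-1) (by norm_num)
      have hMij : M i j = 2 * X i j - 1 := by
        simp [hM, hJ, Matrix.sub_apply, Matrix.smul_apply]
      nlinarith
end

section
/- (Proposition: relaxation (3) dominates relaxation (2).) Let m1 > m2 > 0 with m1 + m2 = n. If Y is feasible for the vector-lifting relaxation (3), then X := Y11 + Y22 satisfies diag(X) = e, tr(JX) = m1² + m2², and 2X − J ⪰ 0, i.e., X is feasible for the order-n relaxation (2); moreover the objective values agree: (1/2)tr(L(Y11 + Y22)) = (1/2)tr(LX). Consequently the optimal value of (3) is at least that of (2). -/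
open Matrix BigOperators

/-- If `Y` is feasible for the vector-lifting relaxation (3), then
`X := Y11 + Y22` is feasible for the order-`n` relaxation (2), and the objective
values agree.  Hence relaxation (3) dominates relaxation (2). -/
theorem vector_lifting_dominates_order_n
    (n : ℕ) (hn : 0 < n) (m1 m2 : ℝ)
    (hm : m1 + m2 = n) (h12 : m1 > m2) (h2pos : m2 > 0)
    (e : Fin n → ℝ) (he : e = fun _ => 1)
    (J : Matrix (Fin n) (Fin n) ℝ) (hJ : J = Matrix.of fun _ _ => 1)
    (L : Matrix (Fin n) (Fin n) ℝ) (hL : L.IsSymm)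
    (Y11 Y12 Y22 : Matrix (Fin n) (Fin n) ℝ)
    (Y : Matrix (Fin n ⊕ Fin n) (Fin n ⊕ Fin n) ℝ)
    (hY : Y = Matrix.fromBlocks Y11 Y12 Y12ᵀ Y22)
    (hYsymm : Y.IsSymm)
    (htr11 : Matrix.trace Y11 = m1) (htr22 : Matrix.trace Y22 = m2)
    (htrJ11 : Matrix.trace (J * Y11) = m1 ^ 2)
    (htrJ22 : Matrix.trace (J * Y22) = m2 ^ 2)
    (hdiag12 : Y12.diag = 0)
    (htrJ12 : Matrix.trace (J * (Y12 + Y12ᵀ)) = 2 * m1 * m2)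
    (hpsd : (Y - vecMulVec Y.diag Y.diag).PosSemidef)
    (hnonneg : ∀ i j, 0 ≤ Y i j)
    (X : Matrix (Fin n) (Fin n) ℝ) (hX : X = Y11 + Y22) :
    X.diag = e ∧
    Matrix.trace (J * X) = m1 ^ 2 + m2 ^ 2 ∧
    ((2 : ℝ) • X - J).PosSemidef ∧
    (1 / 2) * Matrix.trace (L * (Y11 + Y22)) = (1 / 2) * Matrix.trace (L * X) := by
  subst hY hX hJ he
  -- the key quadratic-form inequality from positive semidefiniteness
  have key : ∀ u v : Fin n → ℝ,
      ((fun i => Y11 i i) ⬝ᵥ u + (fun i => Y22 i i) ⬝ᵥ v) ^ 2 ≤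
        u ⬝ᵥ (Y11 *ᵥ u) + u ⬝ᵥ (Y12 *ᵥ v) + v ⬝ᵥ (Y12ᵀ *ᵥ u) + v ⬝ᵥ (Y22 *ᵥ v) := by
    intro u v
    have h := hpsd.dotProduct_mulVec_nonneg (Sum.elim u v)
    have hdiag : (Matrix.fromBlocks Y11 Y12 Y12ᵀ Y22).diag
        = Sum.elim (fun i => Y11 i i) (fun i => Y22 i i) := by
      funext a; cases a <;> simp [Matrix.diag]
    simp only [star_trivial, Matrix.sub_mulVec, hdiag, Matrix.fromBlocks_mulVec,
      dotProduct_sub] at h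
    have hvmv : vecMulVec (Sum.elim (fun i => Y11 i i) (fun i => Y22 i i))
          (Sum.elim (fun i => Y11 i i) (fun i => Y22 i i)) *ᵥ (Sum.elim u v)
        = ((fun i => Y11 i i) ⬝ᵥ u + (fun i => Y22 i i) ⬝ᵥ v) •
            (Sum.elim (fun i => Y11 i i) (fun i => Y22 i i)) := by
      funext a
      cases a <;>
        simp [Matrix.mulVec, Matrix.vecMulVec_apply, dotProduct, mul_add, Finset.mul_sum,
          add_mul, Finset.sum_mul, mul_assoc, mul_comm, mul_left_comm, Finset.sum_add_distrib]
    rw [hvmv] at h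
    simp only [sumElim_dotProduct_sumElim, dotProduct_smul, dotProduct_add,
      Sum.elim_comp_inl, Sum.elim_comp_inr, smul_eq_mul, dotProduct_comm u (fun i => Y11 i i),
      dotProduct_comm v (fun i => Y22 i i)] at h
    nlinarith [h]
  -- block quadratic forms
  have h2 : ∀ u : Fin n → ℝ, ((fun i => Y11 i i) ⬝ᵥ u) ^ 2 ≤ u ⬝ᵥ (Y11 *ᵥ u) := by
    intro u; simpa using key u 0
  have h3 : ∀ u : Fin n → ℝ, ((fun i => Y22 i i) ⬝ᵥ u) ^ 2 ≤ u ⬝ᵥ (Y22 *ᵥ u) := by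
    intro u; simpa using key 0 u
  -- the diagonal sums are all equal to 1
  have h12z : ∀ i, Y12 i i = 0 := fun i => congrFun hdiag12 i
  have hqle : ∀ i, (Y11 i i + Y22 i i) ^ 2 ≤ Y11 i i + Y22 i i := by
    intro i
    have h := key (Pi.single i 1) (Pi.single i 1)
    simpa [Matrix.mulVec_single, dotProduct_single, single_dotProduct,
      h12z i, Matrix.transpose_apply] using h
  have hq0 : ∀ i, 0 ≤ Y11 i i + Y22 i i := by
    intro i
    have h1 := hnonneg (Sum.inl i) (Sum.inl i)
    have h2 := hnonneg (Sum.inr i) (Sum.inr i)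
    simp only [Matrix.fromBlocks_apply₁₁, Matrix.fromBlocks_apply₂₂] at h1 h2
    linarith
  have hqle1 : ∀ i, Y11 i i + Y22 i i ≤ 1 := by
    intro i; nlinarith [hqle i, hq0 i]
  have hsum : ∑ i : Fin n, (Y11 i i + Y22 i i) = (n : ℝ) := by
    rw [Finset.sum_add_distrib]
    have : Matrix.trace Y11 + Matrix.trace Y22 = m1 + m2 := by rw [htr11, htr22]
    simpa [Matrix.trace, Matrix.diag, hm] using this
  have hone : ∀ i, Y11 i i + Y22 i i = 1 := by
    have h0 : ∑ i : Fin n, (1 - (Y11 i i + Y22 i i)) = 0 := by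
      rw [Finset.sum_sub_distrib, hsum]
      simp
    have h1 := (Finset.sum_eq_zero_iff_of_nonneg
      (fun i _ => by linarith [hqle1 i])).mp h0
    intro i
    have := h1 i (Finset.mem_univ i)
    linarith
  -- symmetry of the blocks
  have hsymm' : (Matrix.fromBlocks Y11 Y12 Y12ᵀ Y22)ᵀ = Matrix.fromBlocks Y11 Y12 Y12ᵀ Y22 :=
    hYsymm
  have hs11 : Y11ᵀ = Y11 := by
    have := congrArg Matrix.toBlocks₁₁ hsymm'
    simpa [Matrix.fromBlocks_transpose] using this
  have hs22 : Y22ᵀ = Y22 := by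
    have := congrArg Matrix.toBlocks₂₂ hsymm'
    simpa [Matrix.fromBlocks_transpose] using this
  refine ⟨?_, ?_, ?_, rfl⟩
  · funext i
    simpa [Matrix.diag] using hone i
  · rw [Matrix.mul_add, Matrix.trace_add, htrJ11, htrJ22]
  · apply Matrix.PosSemidef.of_dotProduct_mulVec_nonneg
    · show _ᴴ = _
      ext i j
      have e11 : Y11 j i = Y11 i j := congrFun (congrFun hs11 i) j
      have e22 : Y22 j i = Y22 i j := congrFun (congrFun hs22 i) j
      simp [Matrix.conjTranspose_apply, Matrix.transpose_apply, e11, e22]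
    · intro u
      simp only [star_trivial]
      have hexp : u ⬝ᵥ (((2 : ℝ) • (Y11 + Y22) - Matrix.of fun _ _ => (1:ℝ)) *ᵥ u)
          = 2 * (u ⬝ᵥ (Y11 *ᵥ u)) + 2 * (u ⬝ᵥ (Y22 *ᵥ u))
            - u ⬝ᵥ ((Matrix.of fun _ _ => (1:ℝ)) *ᵥ u) := by
        rw [Matrix.sub_mulVec, dotProduct_sub, Matrix.smul_mulVec,
          Matrix.add_mulVec, dotProduct_smul, dotProduct_add]
        simp only [smul_eq_mul]; ring
      have hJu : u ⬝ᵥ ((Matrix.of fun _ _ => (1:ℝ)) *ᵥ u) = (∑ i, u i) ^ 2 := by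
        simp [Matrix.mulVec, dotProduct, ← Finset.sum_mul, sq]
      have hsu : (∑ i, u i) = (fun i => Y11 i i) ⬝ᵥ u + (fun i => Y22 i i) ⬝ᵥ u := by
        have : ∀ i : Fin n, u i = (Y11 i i) * u i + (Y22 i i) * u i := by
          intro i
          rw [← add_mul, hone i, one_mul]
        simp only [dotProduct]
        rw [← Finset.sum_add_distrib]
        exact Finset.sum_congr rfl fun i _ => this i
      rw [hexp, hJu, hsu]
      nlinarith [h2 u, h3 u, sq_nonneg ((fun i => Y11 i i) ⬝ᵥ u - (fun i => Y22 i i) ⬝ᵥ u)]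
end

section
/- (Property (7).) Let m1 > m2 > 0 with m1 + m2 = n, and let Y be feasible for the vector-lifting relaxation (3), with y1 := diag(Y11) and y2 := diag(Y22). Then Y11 + Y12 = y1 eᵀ, Y12ᵀ + Y22 = y2 eᵀ, y1 + y2 = e, and Y_{ii} e = m_i y_i for i = 1, 2. In particular, Y12, Y22 and y2 are uniquely determined by Y11 and y1. -/
open Matrix BigOperators

lemma trace_ones_mul {n : ℕ} (A : Matrix (Fin n) (Fin n) ℝ) :
    Matrix.trace ((Matrix.of fun _ _ => (1:ℝ)) * A) = ∑ i, ∑ j, A i j := by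
  simp only [Matrix.trace, Matrix.mul_apply, Matrix.diag, Matrix.of_apply, one_mul]
  rw [Finset.sum_comm]

lemma vmv_mulVec {n : ℕ} (d x : Fin n ⊕ Fin n → ℝ) :
    Matrix.vecMulVec d d *ᵥ x = (d ⬝ᵥ x) • d := by
  ext j
  simp [Matrix.vecMulVec_apply, Matrix.mulVec, dotProduct, Finset.mul_sum, Pi.smul_apply,
    mul_comm, mul_left_comm, mul_add]

/-- Property (7): If `Y` is feasible for the vector-lifting
relaxation (3), with `y1 = diag Y11` and `y2 = diag Y22`, then
`Y11 + Y12 = y1 eᵀ`, `Y12ᵀ + Y22 = y2 eᵀ`, `y1 + y2 = e`, and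
`Y11 e = m1 y1`, `Y22 e = m2 y2`.  In particular `Y12`, `Y22` and `y2` are
uniquely determined by `Y11` and `y1`. -/
theorem property_seven
    (n : ℕ) (hn : 0 < n) (m1 m2 : ℝ)
    (hm : m1 + m2 = n) (h12 : m1 > m2) (h2pos : m2 > 0)
    (e : Fin n → ℝ) (he : e = fun _ => 1)
    (J : Matrix (Fin n) (Fin n) ℝ) (hJ : J = Matrix.of fun _ _ => 1)
    (Y11 Y12 Y22 : Matrix (Fin n) (Fin n) ℝ)
    (Y : Matrix (Fin n ⊕ Fin n) (Fin n ⊕ Fin n) ℝ)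
    (hY : Y = Matrix.fromBlocks Y11 Y12 Y12ᵀ Y22)
    (hYsymm : Y.IsSymm)
    (y1 y2 : Fin n → ℝ) (hy1 : y1 = Y11.diag) (hy2 : y2 = Y22.diag)
    (htr11 : Matrix.trace Y11 = m1) (htr22 : Matrix.trace Y22 = m2)
    (htrJ11 : Matrix.trace (J * Y11) = m1 ^ 2)
    (htrJ22 : Matrix.trace (J * Y22) = m2 ^ 2)
    (hdiag12 : Y12.diag = 0)
    (htrJ12 : Matrix.trace (J * (Y12 + Y12ᵀ)) = 2 * m1 * m2)
    (hpsd : (Y - vecMulVec Y.diag Y.diag).PosSemidef)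
    (hnonneg : ∀ i j, 0 ≤ Y i j) :
    Y11 + Y12 = vecMulVec y1 e ∧
    Y12ᵀ + Y22 = vecMulVec y2 e ∧
    y1 + y2 = e ∧
    Y11 *ᵥ e = m1 • y1 ∧
    Y22 *ᵥ e = m2 • y2 := by
  subst hJ hy1 hy2 hY
  set B : Matrix (Fin n ⊕ Fin n) (Fin n ⊕ Fin n) ℝ := fromBlocks Y11 Y12 Y12ᵀ Y22 with hB
  set d : Fin n ⊕ Fin n → ℝ := B.diag with hdd
  have hd : d = Sum.elim Y11.diag Y22.diag := by
    funext i; cases i <;> simp [hdd, hB, Matrix.diag]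
  -- general quadratic form facts
  have hqf : ∀ x : Fin n ⊕ Fin n → ℝ,
      x ⬝ᵥ (B - vecMulVec d d) *ᵥ x = x ⬝ᵥ B *ᵥ x - (d ⬝ᵥ x) ^ 2 := by
    intro x
    rw [Matrix.sub_mulVec, dotProduct_sub, vmv_mulVec, dotProduct_smul]
    rw [dotProduct_comm x d, smul_eq_mul]
    ring
  have hineq : ∀ x : Fin n ⊕ Fin n → ℝ, (d ⬝ᵥ x) ^ 2 ≤ x ⬝ᵥ B *ᵥ x := by
    intro x
    have h := hpsd.dotProduct_mulVec_nonneg x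
    simp only [star_trivial] at h
    rw [hqf x] at h
    linarith
  have key : ∀ x : Fin n ⊕ Fin n → ℝ,
      x ⬝ᵥ B *ᵥ x = (d ⬝ᵥ x) ^ 2 → B *ᵥ x = (d ⬝ᵥ x) • d := by
    intro x hx
    have h0 : (B - vecMulVec d d) *ᵥ x = 0 := by
      rw [← hpsd.dotProduct_mulVec_zero_iff]
      simp only [star_trivial]
      rw [hqf x, hx]; ring
    rw [Matrix.sub_mulVec, sub_eq_zero] at h0
    rw [h0, vmv_mulVec]
  -- the all-ones block vectors
  set ones : Fin n → ℝ := fun _ => 1 with hones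
  have hdot_ones : ∀ v : Fin n → ℝ, v ⬝ᵥ ones = ∑ i, v i := by
    intro v; simp [dotProduct, hones]
  have hsum11 : ∑ i, ∑ j, Y11 i j = m1 ^ 2 := by rw [← htrJ11, trace_ones_mul]
  have hsum22 : ∑ i, ∑ j, Y22 i j = m2 ^ 2 := by rw [← htrJ22, trace_ones_mul]
  have hdtr1 : ∑ i, Y11.diag i = m1 := htr11
  have hdtr2 : ∑ i, Y22.diag i = m2 := htr22
  -- vector v1 = (e, 0)
  have hv1 : B *ᵥ (Sum.elim ones 0) = m1 • d := by
    have hc : d ⬝ᵥ Sum.elim ones 0 = m1 := by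
      rw [hd, sumElim_dotProduct_sumElim, hdot_ones, hdtr1, dotProduct_zero, add_zero]
    have := key (Sum.elim ones 0) ?_
    · rwa [hc] at this
    · rw [hc, hB, fromBlocks_mulVec, sumElim_dotProduct_sumElim]
      simp only [Sum.elim_comp_inl, Sum.elim_comp_inr, Matrix.mulVec_zero, add_zero,
        zero_dotProduct, zero_add]
      rw [← hsum11]
      simp [dotProduct, Matrix.mulVec, hones]
  -- vector v2 = (0, e)
  have hv2 : B *ᵥ (Sum.elim 0 ones) = m2 • d := by
    have hc : d ⬝ᵥ Sum.elim 0 ones = m2 := by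
      rw [hd, sumElim_dotProduct_sumElim, hdot_ones, hdtr2, dotProduct_zero, zero_add]
    have := key (Sum.elim 0 ones) ?_
    · rwa [hc] at this
    · rw [hc, hB, fromBlocks_mulVec, sumElim_dotProduct_sumElim]
      simp only [Sum.elim_comp_inl, Sum.elim_comp_inr, Matrix.mulVec_zero, zero_add,
        zero_dotProduct]
      rw [← hsum22]
      simp [dotProduct, Matrix.mulVec, hones]
  -- the diagonal sums s i = Y11 i i + Y22 i i
  set s : Fin n → ℝ := fun i => Y11 i i + Y22 i i with hs
  have hzc : ∀ i, d ⬝ᵥ Sum.elim (Pi.single i 1) (Pi.single i 1) = s i := by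
    intro i
    rw [hd, sumElim_dotProduct_sumElim, dotProduct_single, dotProduct_single]
    simp [Matrix.diag, hs]
  have hzq : ∀ i, (Sum.elim (Pi.single i (1:ℝ)) (Pi.single i 1)) ⬝ᵥ
      B *ᵥ (Sum.elim (Pi.single i 1) (Pi.single i 1)) = s i := by
    intro i
    have h12i : Y12 i i = 0 := congrFun hdiag12 i
    rw [hB, fromBlocks_mulVec, sumElim_dotProduct_sumElim]
    simp [Matrix.mulVec_single, single_dotProduct, Matrix.transpose_apply, h12i, hs]
  have hs_nonneg : ∀ i, 0 ≤ s i :=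
    fun i => add_nonneg (hnonneg (Sum.inl i) (Sum.inl i)) (hnonneg (Sum.inr i) (Sum.inr i))
  have hs_le : ∀ i, s i ≤ 1 := by
    intro i
    have h := hineq (Sum.elim (Pi.single i 1) (Pi.single i 1))
    rw [hzc i, hzq i] at h
    nlinarith [hs_nonneg i]
  have hs_sum : ∑ i, s i = (n : ℝ) := by
    have h1 : ∑ i, Y11 i i = m1 := hdtr1
    have h2 : ∑ i, Y22 i i = m2 := hdtr2
    rw [hs, Finset.sum_add_distrib, h1, h2, hm]
  have hs_one : ∀ i, s i = 1 := by
    have h0 : ∑ i : Fin n, (1 - s i) = 0 := by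
      rw [Finset.sum_sub_distrib, hs_sum]; simp
    intro i
    have := (Finset.sum_eq_zero_iff_of_nonneg
      (fun j _ => by linarith [hs_le j] : ∀ j ∈ Finset.univ, 0 ≤ 1 - s j)).mp h0 i
      (Finset.mem_univ i)
    linarith
  have hz : ∀ i, B *ᵥ (Sum.elim (Pi.single i 1) (Pi.single i 1)) = d := by
    intro i
    have := key (Sum.elim (Pi.single i 1) (Pi.single i 1)) ?_
    · rw [hzc i, hs_one i, one_smul] at this; exact this
    · rw [hzq i, hzc i, hs_one i]; norm_num
  subst he
  refine ⟨?_, ?_, ?_, ?_, ?_⟩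
  · ext j i
    have h := congrFun (hz i) (Sum.inl j)
    rw [hB, fromBlocks_mulVec] at h
    simp only [Sum.elim_inl, Matrix.mulVec_single, Pi.add_apply, mul_one, hd] at h
    simp only [Matrix.add_apply, Matrix.vecMulVec_apply, hones, mul_one]
    simpa using h
  · ext j i
    have h := congrFun (hz i) (Sum.inr j)
    rw [hB, fromBlocks_mulVec] at h
    simp only [Sum.elim_inr, Matrix.mulVec_single, Pi.add_apply, mul_one, hd] at h
    simp only [Matrix.add_apply, Matrix.vecMulVec_apply, hones, mul_one]
    simpa using h
  · funext i
    have := hs_one i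
    simp only [Pi.add_apply, Matrix.diag]
    simpa [hs] using this
  · funext j
    have h := congrFun hv1 (Sum.inl j)
    rw [hB, fromBlocks_mulVec] at h
    simp only [Sum.elim_inl, Matrix.mulVec_zero, add_zero, Pi.smul_apply, hd, smul_eq_mul] at h
    simpa using h
  · funext j
    have h := congrFun hv2 (Sum.inr j)
    rw [hB, fromBlocks_mulVec] at h
    simp only [Sum.elim_inr, Matrix.mulVec_zero, zero_add, Pi.smul_apply, hd, smul_eq_mul] at h
    simpa using h
end

section
/- (Proposition 4.1.) Let X be a symmetric real n×n matrix such that c·diag(X) = Xe for some real number c, and let X̄ be the (n+1)×(n+1) symmetric matrix with block form X̄ = [[1, diag(X)ᵀ],[diag(X), X]]. Then the following are equivalent: (i) X̄ is positive semidefinite; (ii) X is positive semidefinite and tr(JX) ≥ (tr X)². -/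
open Matrix BigOperators

private lemma quad_form (n : ℕ) (d : Fin n → ℝ) (X : Matrix (Fin n) (Fin n) ℝ)
    (z : Fin 1 ⊕ Fin n → ℝ) :
    z ⬝ᵥ (Matrix.fromBlocks
      (Matrix.of fun _ _ => (1 : ℝ))
      (Matrix.of fun _ j => d j)
      (Matrix.of fun i _ => d i)
      X) *ᵥ z
    = (z (Sum.inl 0))^2 + 2 * z (Sum.inl 0) * (d ⬝ᵥ (z ∘ Sum.inr))
      + (z ∘ Sum.inr) ⬝ᵥ X *ᵥ (z ∘ Sum.inr) := by
  simp only [dotProduct, Matrix.mulVec, Fintype.sum_sum_type,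
    Fin.sum_univ_one, Matrix.fromBlocks_apply₁₁, Matrix.fromBlocks_apply₁₂,
    Matrix.fromBlocks_apply₂₁, Matrix.fromBlocks_apply₂₂, Matrix.of_apply,
    Function.comp_apply, mul_add, Finset.sum_add_distrib]
  have h1 : ∑ x : Fin n, z (Sum.inr x) * (d x * z (Sum.inl 0))
      = z (Sum.inl 0) * ∑ x : Fin n, d x * z (Sum.inr x) := by
    rw [Finset.mul_sum]; exact Finset.sum_congr rfl fun i _ => by ring
  rw [h1]; ring

/-- Proposition 4.1: Let `X` be symmetric with `c • diag X = X e`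
for some real `c`, and let `X̄ = [[1, diag(X)ᵀ], [diag X, X]]`.  Then `X̄ ⪰ 0`
iff `X ⪰ 0` and `tr (J X) ≥ (tr X)²`. -/
theorem bordered_psd_iff
    (n : ℕ) (hn : 0 < n)
    (e : Fin n → ℝ) (he : e = fun _ => 1)
    (J : Matrix (Fin n) (Fin n) ℝ) (hJ : J = Matrix.of fun _ _ => 1)
    (X : Matrix (Fin n) (Fin n) ℝ) (hX : X.IsSymm)
    (c : ℝ) (hc : c • X.diag = X *ᵥ e)
    (Xbar : Matrix (Fin 1 ⊕ Fin n) (Fin 1 ⊕ Fin n) ℝ)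
    (hXbar : Xbar = Matrix.fromBlocks
      (Matrix.of fun _ _ => (1 : ℝ))
      (Matrix.of fun _ j => X.diag j)
      (Matrix.of fun i _ => X.diag i)
      X) :
    Xbar.PosSemidef ↔ (X.PosSemidef ∧ (Matrix.trace X) ^ 2 ≤ Matrix.trace (J * X)) := by
  subst hJ hXbar
  set d := X.diag with hd
  -- scalar facts
  have htr : X.trace = ∑ i, d i := rfl
  have hde : d ⬝ᵥ e = X.trace := by
    simp [dotProduct, htr, he]
  have hS : Matrix.trace ((Matrix.of fun _ _ => (1:ℝ)) * X) = e ⬝ᵥ X *ᵥ e := by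
    simp only [Matrix.trace, Matrix.diag, Matrix.mul_apply, Matrix.of_apply, one_mul,
      dotProduct, Matrix.mulVec, he, mul_one]
    exact Finset.sum_comm
  have hce : e ⬝ᵥ X *ᵥ e = c * X.trace := by
    rw [← hc, dotProduct_smul, smul_eq_mul, dotProduct_comm, hde]
  have hXsymm : ∀ u v : Fin n → ℝ, u ⬝ᵥ X *ᵥ v = v ⬝ᵥ X *ᵥ u := by
    intro u v
    rw [dotProduct_mulVec, ← Matrix.mulVec_transpose, hX.eq, dotProduct_comm]
  constructor
  · intro hXb
    obtain ⟨hherm, hpos⟩ := posSemidef_iff_dotProduct_mulVec.mp hXb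
    have hXpsd : X.PosSemidef := by
      refine posSemidef_iff_dotProduct_mulVec.mpr ⟨?_, ?_⟩
      · ext i j
        simpa using congrFun (congrFun hX i) j
      · intro y
        have h := hpos (Sum.elim (fun _ : Fin 1 => (0:ℝ)) y)
        have hst : star (Sum.elim (fun _ : Fin 1 => (0:ℝ)) y) =
            Sum.elim (fun _ : Fin 1 => (0:ℝ)) y := rfl
        rw [hst, quad_form] at h
        simpa using h
    refine ⟨hXpsd, ?_⟩
    have h := hpos (Sum.elim (fun _ : Fin 1 => -X.trace) e)
    have hst : star (Sum.elim (fun _ : Fin 1 => -X.trace) e) =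
        Sum.elim (fun _ : Fin 1 => -X.trace) e := rfl
    rw [hst, quad_form] at h
    simp only [Sum.elim_inl, Sum.elim_comp_inr] at h
    rw [hde, hce] at h
    rw [hS, hce]
    nlinarith [h]
  · rintro ⟨hXpsd, hineq⟩
    rw [hS, hce] at hineq
    have hdnn : ∀ i, 0 ≤ d i := by
      intro i
      have h := hXpsd.dotProduct_mulVec_nonneg (Pi.single i 1)
      rw [star_trivial] at h
      simpa [single_dotProduct, Matrix.mulVec_single, hd] using h
    have hTnn : 0 ≤ X.trace := by
      rw [htr]; exact Finset.sum_nonneg fun i _ => hdnn i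
    -- key: (d ⬝ᵥ y)^2 ≤ y ⬝ᵥ X *ᵥ y for all y
    have key : ∀ y : Fin n → ℝ, (d ⬝ᵥ y)^2 ≤ y ⬝ᵥ X *ᵥ y := by
      intro y
      have hyXy : 0 ≤ y ⬝ᵥ X *ᵥ y := by
        have h := hXpsd.dotProduct_mulVec_nonneg y
        have hst : star y = y := rfl
        rwa [hst] at h
      rcases eq_or_lt_of_le hTnn with hT0 | hTpos
      · -- trace zero : all diagonal entries vanish
        have hdzero : ∀ i, d i = 0 := by
          intro i
          have hsum : ∑ i, d i = 0 := by rw [← htr, ← hT0]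
          exact (Finset.sum_eq_zero_iff_of_nonneg (fun i _ => hdnn i)).mp hsum i
            (Finset.mem_univ i)
        have hdy : d ⬝ᵥ y = 0 := by
          simp [dotProduct, fun i => hdzero i]
        rw [hdy]
        simpa using hyXy
      · -- positive trace
        have hcT : X.trace ≤ c := by nlinarith [hineq, hTpos]
        have hcpos : 0 < c := lt_of_lt_of_le hTpos hcT
        -- Cauchy-Schwarz for the PSD form
        have hCS : (e ⬝ᵥ X *ᵥ y)^2 ≤ (e ⬝ᵥ X *ᵥ e) * (y ⬝ᵥ X *ᵥ y) := by
          have hdisc := discrim_le_zero (a := y ⬝ᵥ X *ᵥ y) (b := 2 * (e ⬝ᵥ X *ᵥ y))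
            (c := e ⬝ᵥ X *ᵥ e) ?_
          · rw [discrim] at hdisc
            nlinarith [hdisc]
          · intro t
            have h := hXpsd.dotProduct_mulVec_nonneg (e + t • y)
            have hst : star (e + t • y) = e + t • y := rfl
            rw [hst] at h
            rw [Matrix.mulVec_add, Matrix.mulVec_smul, add_dotProduct,
              smul_dotProduct, dotProduct_add, dotProduct_smul,
              dotProduct_add, dotProduct_smul] at h
            rw [hXsymm y e] at h
            convert h using 1
            simp only [smul_eq_mul]
            ring
        have hdy : d ⬝ᵥ y = c⁻¹ * (e ⬝ᵥ X *ᵥ y) := by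
          have hdval : d = c⁻¹ • (X *ᵥ e) := by
            rw [← hc, smul_smul, inv_mul_cancel₀ (ne_of_gt hcpos), one_smul]
          rw [hdval, smul_dotProduct, smul_eq_mul]
          congr 1
          rw [dotProduct_comm, hXsymm y e]
        rw [hce] at hCS
        rw [hdy]
        have hrw : (c⁻¹ * (e ⬝ᵥ X *ᵥ y))^2 = (e ⬝ᵥ X *ᵥ y)^2 / (c*c) := by
          rw [div_eq_mul_inv, mul_inv]; ring
        rw [hrw, div_le_iff₀ (mul_pos hcpos hcpos)]
        nlinarith [hCS, mul_le_mul_of_nonneg_right hcT hyXy, hcpos, hyXy]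
    refine posSemidef_iff_dotProduct_mulVec.mpr ⟨?_, ?_⟩
    · show _ᴴ = _
      ext i j
      rcases i with i | i <;> rcases j with j | j <;>
        simp [Matrix.conjTranspose_apply]
      exact congrFun (congrFun hX i) j
    · intro z
      have hst : star z = z := rfl
      rw [hst, quad_form]
      have h := key (z ∘ Sum.inr)
      nlinarith [h, sq_nonneg (z (Sum.inl 0) + d ⬝ᵥ (z ∘ Sum.inr))]
end

section
/- Let m1 > 0 and let X be a symmetric real n×n matrix with x := diag(X) satisfying eᵀx = m1, tr(JX) = m1², and Xe = m1·x. Then X is positive semidefinite if and only if X − x xᵀ is positive semidefinite. (Hence in the simplified relaxation (8), replacing the constraint X ⪰ 0 by X − x xᵀ ⪰ 0 yields the same feasible set.) -/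
open Matrix BigOperators

lemma vecMulVec_self_posSemidef {n : ℕ} (x : Fin n → ℝ) :
    (vecMulVec x x).PosSemidef := by
  rw [posSemidef_iff_dotProduct_mulVec]
  constructor
  · ext i j
    simp [vecMulVec_apply, conjTranspose_apply, mul_comm]
  · intro v
    have hmv : vecMulVec x x *ᵥ v = (x ⬝ᵥ v) • x := by
      ext i
      simp only [vecMulVec_apply, mulVec, dotProduct, Pi.smul_apply, smul_eq_mul,
        Finset.sum_mul]
      exact Finset.sum_congr rfl fun j _ => by ring
    have : star v ⬝ᵥ (vecMulVec x x *ᵥ v) = (x ⬝ᵥ v) * (x ⬝ᵥ v) := by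
      rw [hmv]
      simp [dotProduct_smul, dotProduct_comm x v, mul_comm]
    rw [this]
    exact mul_self_nonneg _

/-- If `X` is symmetric with `x = diag X`, `eᵀ x = m1 > 0`,
`tr (J X) = m1²`, and `X e = m1 • x`, then `X ⪰ 0` iff `X - x xᵀ ⪰ 0`. -/
theorem psd_iff_shifted_psd
    (n : ℕ) (hn : 0 < n) (m1 : ℝ) (hm1 : m1 > 0)
    (e : Fin n → ℝ) (he : e = fun _ => 1)
    (J : Matrix (Fin n) (Fin n) ℝ) (hJ : J = Matrix.of fun _ _ => 1)
    (X : Matrix (Fin n) (Fin n) ℝ) (hX : X.IsSymm)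
    (x : Fin n → ℝ) (hx : x = X.diag)
    (h1 : e ⬝ᵥ x = m1)
    (h2 : Matrix.trace (J * X) = m1 ^ 2)
    (h3 : X *ᵥ e = m1 • x) :
    X.PosSemidef ↔ (X - vecMulVec x x).PosSemidef := by
  constructor
  · intro hpsd
    rw [posSemidef_iff_dotProduct_mulVec]
    refine ⟨hpsd.1.sub (vecMulVec_self_posSemidef x).1, ?_⟩
    intro v
    -- key: quadratic form nonneg at v + t • e with t = -(x ⬝ᵥ v)/m1
    set b : ℝ := x ⬝ᵥ v with hb
    set t : ℝ := -b / m1 with ht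
    have key := hpsd.dotProduct_mulVec_nonneg (v + t • e)
    have hsym : e ⬝ᵥ (X *ᵥ v) = v ⬝ᵥ (X *ᵥ e) := by
      rw [dotProduct_mulVec, ← mulVec_transpose, hX.eq, dotProduct_comm]
    have hXe : v ⬝ᵥ (X *ᵥ e) = m1 * b := by
      rw [h3]; simp [dotProduct_smul, dotProduct_comm x v, hb, mul_comm]
    have heXe : e ⬝ᵥ (X *ᵥ e) = m1 * m1 := by
      rw [h3]; simp [dotProduct_smul, h1]
    have expand : star (v + t • e) ⬝ᵥ (X *ᵥ (v + t • e))
        = v ⬝ᵥ (X *ᵥ v) + 2 * t * (m1 * b) + t * t * (m1 * m1) := by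
      simp only [star_trivial, mulVec_add, mulVec_smul, dotProduct_add,
        add_dotProduct, smul_dotProduct, dotProduct_smul, smul_eq_mul]
      rw [hsym, hXe, heXe]
      ring
    rw [expand] at key
    have hm1ne : m1 ≠ 0 := ne_of_gt hm1
    have key2 : b * b ≤ v ⬝ᵥ (X *ᵥ v) := by
      have : 2 * t * (m1 * b) + t * t * (m1 * m1) = -(b * b) := by
        have htm : t * m1 = -b := by rw [ht]; exact div_mul_cancel₀ _ hm1ne
        linear_combination (t * m1 + b) * htm
      nlinarith [key]
    have hq : star v ⬝ᵥ ((X - vecMulVec x x) *ᵥ v) = v ⬝ᵥ (X *ᵥ v) - b * b := by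
      simp only [star_trivial, sub_mulVec, dotProduct_sub]
      congr 1
      have hmv : vecMulVec x x *ᵥ v = (x ⬝ᵥ v) • x := by
        ext i
        simp only [vecMulVec_apply, mulVec, dotProduct, Pi.smul_apply, smul_eq_mul,
          Finset.sum_mul]
        exact Finset.sum_congr rfl fun j _ => by ring
      rw [hmv]
      simp [dotProduct_smul, dotProduct_comm x v, hb, mul_comm]
    rw [hq]; linarith
  · intro h
    have : X = (X - vecMulVec x x) + vecMulVec x x := (sub_add_cancel _ _).symm
    rw [this]
    exact h.add (vecMulVec_self_posSemidef x)
end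

section
/- (Theorem: from (8) to (3).) Let m1 > m2 > 0 with m1 + m2 = n. Let X be feasible for the simplified relaxation (8) and set x := diag(X). Define the 2n×2n matrix Y with blocks Y11 := X, Y12 := x eᵀ − X, Y21 := e xᵀ − X, Y22 := J + X − x eᵀ − e xᵀ. Then Y is feasible for the vector-lifting relaxation (3), diag(Y) = (x, e − x), and Y11 + Y22 = 2X + J − x eᵀ − e xᵀ, so the objective values of the two relaxations coincide. -/
open Matrix BigOperators

/-- from (8) to (3): If `X` is feasible for the simplified
relaxation (8), then the block matrix
`Y = [[X, x eᵀ - X], [e xᵀ - X, J + X - x eᵀ - e xᵀ]]` is feasible for the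
vector-lifting relaxation (3), `diag Y = (x, e - x)`, and
`Y11 + Y22 = 2X + J - x eᵀ - e xᵀ`, so the objective values coincide. -/
theorem simplified_to_vector_lifting
    (n : ℕ) (hn : 0 < n) (m1 m2 : ℝ)
    (hm : m1 + m2 = n) (h12 : m1 > m2) (h2pos : m2 > 0)
    (e : Fin n → ℝ) (he : e = fun _ => 1)
    (J : Matrix (Fin n) (Fin n) ℝ) (hJ : J = Matrix.of fun _ _ => 1)
    (X : Matrix (Fin n) (Fin n) ℝ) (hXsymm : X.IsSymm)
    (x : Fin n → ℝ) (hx : x = X.diag)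
    (hsum : e ⬝ᵥ x = m1)
    (htrJ : Matrix.trace (J * X) = m1 ^ 2)
    (hrow : X *ᵥ e = m1 • x)
    (hXnn : ∀ i j, 0 ≤ X i j)
    (hslack1 : ∀ i j, 0 ≤ (vecMulVec x e - X) i j)
    (hslack2 : ∀ i j, 0 ≤ (J + X - vecMulVec x e - vecMulVec e x) i j)
    (hXpsd : X.PosSemidef)
    (Y : Matrix (Fin n ⊕ Fin n) (Fin n ⊕ Fin n) ℝ)
    (hY : Y = Matrix.fromBlocks X (vecMulVec x e - X) (vecMulVec e x - X)
      (J + X - vecMulVec x e - vecMulVec e x)) :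
    Y.IsSymm ∧
    Matrix.trace X = m1 ∧
    Matrix.trace (J + X - vecMulVec x e - vecMulVec e x) = m2 ∧
    Matrix.trace (J * X) = m1 ^ 2 ∧
    Matrix.trace (J * (J + X - vecMulVec x e - vecMulVec e x)) = m2 ^ 2 ∧
    (vecMulVec x e - X).diag = 0 ∧
    Matrix.trace (J * ((vecMulVec x e - X) + (vecMulVec x e - X)ᵀ)) = 2 * m1 * m2 ∧
    (Y - vecMulVec Y.diag Y.diag).PosSemidef ∧
    (∀ i j, 0 ≤ Y i j) ∧
    Y.diag = Sum.elim x (e - x) ∧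
    X + (J + X - vecMulVec x e - vecMulVec e x)
      = (2 : ℝ) • X + J - vecMulVec x e - vecMulVec e x := by
  have hm1pos : (0:ℝ) < m1 := lt_trans h2pos h12
  have hm1ne : m1 ≠ 0 := ne_of_gt hm1pos
  have hXsym : ∀ i j, X j i = X i j := by
    intro i j
    conv_lhs => rw [← hXsymm]
    rfl
  have hdiag : ∀ i, X i i = x i := by intro i; rw [hx]; rfl
  have hsx : ∑ i, x i = m1 := by
    rw [← hsum, he]; simp [dotProduct]
  -- trace of X
  have htrX : Matrix.trace X = m1 := by
    rw [← hsx]; simp [Matrix.trace, Matrix.diag, hdiag]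
  -- traces against J
  have htrxe : Matrix.trace (J * vecMulVec x e) = n * m1 := by
    rw [hJ, he]
    simp [Matrix.trace, Matrix.mul_apply, Matrix.diag, Matrix.vecMulVec_apply,
      Finset.mul_sum, ← Finset.sum_mul, hsx]
  have htrex : Matrix.trace (J * vecMulVec e x) = n * m1 := by
    rw [hJ, he, Matrix.trace]
    simp only [Matrix.diag, Matrix.mul_apply, Matrix.vecMulVec_apply, Matrix.of_apply, one_mul]
    rw [Finset.sum_comm]
    simp [hsx, Finset.mul_sum, ← Finset.sum_mul]
  have htrJJ : Matrix.trace (J * J) = (n:ℝ)^2 := by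
    rw [hJ]
    simp [Matrix.trace, Matrix.mul_apply, Matrix.diag]
    ring
  have htrY22 : Matrix.trace (J + X - vecMulVec x e - vecMulVec e x) = m2 := by
    have h1 : Matrix.trace J = (n:ℝ) := by rw [hJ]; simp [Matrix.trace, Matrix.diag]
    have h2 : Matrix.trace (vecMulVec x e) = m1 := by
      rw [he, ← hsx]; simp [Matrix.trace, Matrix.diag, Matrix.vecMulVec_apply]
    have h3 : Matrix.trace (vecMulVec e x) = m1 := by
      rw [he, ← hsx]; simp [Matrix.trace, Matrix.diag, Matrix.vecMulVec_apply]
    rw [Matrix.trace_sub, Matrix.trace_sub, Matrix.trace_add, h1, h2, h3, htrX]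
    linarith
  have htrJY22 : Matrix.trace (J * (J + X - vecMulVec x e - vecMulVec e x)) = m2 ^ 2 := by
    rw [mul_sub, mul_sub, mul_add, Matrix.trace_sub, Matrix.trace_sub, Matrix.trace_add,
      htrJJ, htrJ, htrxe, htrex]
    nlinarith [hm]
  have hdiag0 : (vecMulVec x e - X).diag = 0 := by
    funext i
    simp [Matrix.diag, Matrix.vecMulVec_apply, he, hdiag]
  have htrB : Matrix.trace (J * ((vecMulVec x e - X) + (vecMulVec x e - X)ᵀ))
      = 2 * m1 * m2 := by
    have ht : (vecMulVec x e - X)ᵀ = vecMulVec e x - X := by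
      ext i j
      simp [Matrix.transpose_apply, Matrix.sub_apply, Matrix.vecMulVec_apply, he, hXsym i j]
    rw [ht, mul_add, mul_sub, mul_sub, Matrix.trace_add, Matrix.trace_sub, Matrix.trace_sub,
      htrxe, htrex, htrJ]
    nlinarith [hm]
  -- symmetry of Y
  have hYsymm : Y.IsSymm := by
    rw [Matrix.IsSymm, hY]
    ext (i|i) (j|j) <;>
      simp [Matrix.transpose_apply, Matrix.fromBlocks, Matrix.sub_apply, Matrix.add_apply,
        Matrix.vecMulVec_apply, he, hJ, hXsym i j] <;> ring
  -- diagonal of Y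
  have hYdiag : Y.diag = Sum.elim x (e - x) := by
    funext i
    rcases i with i | i <;>
      simp [hY, Matrix.diag, Matrix.fromBlocks, Matrix.sub_apply, Matrix.add_apply,
        Matrix.vecMulVec_apply, he, hJ, hdiag i] <;> ring
  -- nonnegativity of Y
  have hYnn : ∀ i j, 0 ≤ Y i j := by
    rintro (i|i) (j|j)
    · simpa [hY] using hXnn i j
    · simpa [hY] using hslack1 i j
    · have h := hslack1 j i
      simp only [Matrix.sub_apply, Matrix.vecMulVec_apply, he, mul_one] at h
      rw [hXsym i j] at h
      simpa [hY, Matrix.sub_apply, Matrix.vecMulVec_apply, he] using h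
    · simpa [hY] using hslack2 i j
  -- the core PSD matrix M = X - x xᵀ
  have hCS : ∀ a b : Fin n → ℝ, (a ⬝ᵥ b)^2 ≤ (a ⬝ᵥ a) * (b ⬝ᵥ b) := by
    intro a b
    simpa [dotProduct, sq] using Finset.sum_mul_sq_le_sq_mul_sq Finset.univ a b
  have houter : ∀ (a b v : Fin n → ℝ), vecMulVec a b *ᵥ v = (b ⬝ᵥ v) • a := by
    intro a b v
    funext i
    simp [Matrix.mulVec, Matrix.vecMulVec_apply, dotProduct, Finset.mul_sum, Finset.sum_mul,
      mul_comm, mul_assoc, mul_left_comm]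
  obtain ⟨S, hSS, hSsym⟩ : ∃ S : Matrix (Fin n) (Fin n) ℝ, S * S = X ∧ Sᵀ = S := by
    open scoped MatrixOrder in
    exact ⟨CFC.sqrt X, CFC.sqrt_mul_sqrt_self X hXpsd.nonneg,
      by simpa using (CFC.sqrt_nonneg X).posSemidef.isHermitian.eq⟩
  have hsymdot : ∀ a b : Fin n → ℝ, (S *ᵥ a) ⬝ᵥ b = a ⬝ᵥ (S *ᵥ b) := by
    intro a b
    rw [dotProduct_mulVec, ← vecMul_transpose, hSsym]
  have hXdot : ∀ a b : Fin n → ℝ, a ⬝ᵥ (X *ᵥ b) = (S *ᵥ a) ⬝ᵥ (S *ᵥ b) := by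
    intro a b
    rw [← hSS, ← Matrix.mulVec_mulVec, ← hsymdot]
  have hee : (S *ᵥ e) ⬝ᵥ (S *ᵥ e) = m1 ^ 2 := by
    rw [← hXdot, hrow, dotProduct_smul, hsum]
    simp [sq]
  have hM : (X - vecMulVec x x).PosSemidef := by
    refine Matrix.PosSemidef.of_dotProduct_mulVec_nonneg ?_ ?_
    · exact hXpsd.isHermitian.sub (by ext i j; simp [Matrix.vecMulVec_apply, mul_comm])
    · intro v
      have hstar : star v = v := by simp
      rw [hstar, Matrix.sub_mulVec, dotProduct_sub, houter, dotProduct_smul]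
      have hxv : x ⬝ᵥ v = m1⁻¹ * ((S *ᵥ e) ⬝ᵥ (S *ᵥ v)) := by
        have hxe : x = m1⁻¹ • (X *ᵥ e) := by
          rw [hrow, smul_smul, inv_mul_cancel₀ hm1ne, one_smul]
        rw [hxe, smul_dotProduct, smul_eq_mul, dotProduct_comm, hXdot, dotProduct_comm (S *ᵥ v)]
      have hvv : v ⬝ᵥ (X *ᵥ v) = (S *ᵥ v) ⬝ᵥ (S *ᵥ v) := hXdot v v
      have hcs := hCS (S *ᵥ e) (S *ᵥ v)
      rw [hee] at hcs
      have hvx : v ⬝ᵥ x = x ⬝ᵥ v := dotProduct_comm v x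
      rw [hvx, hxv, hvv, smul_eq_mul]
      have h2 : (m1⁻¹ * ((S *ᵥ e) ⬝ᵥ (S *ᵥ v))) * (m1⁻¹ * ((S *ᵥ e) ⬝ᵥ (S *ᵥ v)))
          = ((S *ᵥ e) ⬝ᵥ (S *ᵥ v))^2 * (m1^2)⁻¹ := by
        rw [← inv_pow]; ring
      rw [h2]
      have h3 : ((S *ᵥ e) ⬝ᵥ (S *ᵥ v))^2 * (m1^2)⁻¹
          ≤ (m1 ^ 2 * ((S *ᵥ v) ⬝ᵥ (S *ᵥ v))) * (m1^2)⁻¹ :=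
        mul_le_mul_of_nonneg_right hcs (by positivity)
      have h4 : (m1 ^ 2 * ((S *ᵥ v) ⬝ᵥ (S *ᵥ v))) * (m1^2)⁻¹ = (S *ᵥ v) ⬝ᵥ (S *ᵥ v) := by
        rw [mul_comm (m1^2), mul_assoc, mul_inv_cancel₀ (pow_ne_zero 2 hm1ne), mul_one]
      linarith [h3.trans_eq h4]
  -- Y - y yᵀ = C (X - x xᵀ) Cᴴ with C = [I; -I]
  have hpsd : (Y - vecMulVec Y.diag Y.diag).PosSemidef := by
    set C : Matrix (Fin n ⊕ Fin n) (Fin n) ℝ := Matrix.fromRows 1 (-1) with hC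
    have hCt : Cᴴ = Matrix.fromCols (1 : Matrix (Fin n) (Fin n) ℝ)
        (-1 : Matrix (Fin n) (Fin n) ℝ) := by
      ext i (j|j) <;> simp [hC, Matrix.conjTranspose_apply, Matrix.one_apply, eq_comm]
    have hCMC : C * (X - vecMulVec x x) * Cᴴ
        = Matrix.fromBlocks (X - vecMulVec x x) (-(X - vecMulVec x x))
          (-(X - vecMulVec x x)) (X - vecMulVec x x) := by
      rw [hCt, hC, Matrix.fromRows_mul, Matrix.fromRows_mul_fromCols]
      simp
    have hkey : Y - vecMulVec Y.diag Y.diag = C * (X - vecMulVec x x) * Cᴴ := by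
      rw [hCMC, hYdiag, hY]
      ext (i|i) (j|j) <;>
        simp [Matrix.fromBlocks, Matrix.sub_apply, Matrix.add_apply,
          Matrix.vecMulVec_apply, he, hJ, Matrix.neg_apply, Pi.sub_apply] <;> ring
    rw [hkey]
    exact hM.mul_mul_conjTranspose_same C
  refine ⟨hYsymm, htrX, htrY22, htrJ, htrJY22, hdiag0, htrB, hpsd, hYnn, hYdiag, ?_⟩
  ext i j
  simp [Matrix.add_apply, Matrix.sub_apply, Matrix.smul_apply]
  ring
end

section
/- (Theorem: from (3) to (8).) Let m1 > m2 > 0 with m1 + m2 = n. Let Y be feasible for the vector-lifting relaxation (3). Then X := Y11 with x := diag(Y11) is feasible for the simplified relaxation (8), and Y11 + Y22 = 2X + J − x eᵀ − e xᵀ, so the objective values of the two relaxations coincide. Together with the converse construction, this shows the relaxations (3) and (8) are equivalent. -/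
open Matrix BigOperators

/-- from (3) to (8): If `Y` is feasible for the vector-lifting
relaxation (3), then `X := Y11` with `x := diag Y11` is feasible for the
simplified relaxation (8), and `Y11 + Y22 = 2X + J - x eᵀ - e xᵀ`, so the
objective values of the two relaxations coincide. -/
theorem vector_lifting_to_simplified
    (n : ℕ) (hn : 0 < n) (m1 m2 : ℝ)
    (hm : m1 + m2 = n) (h12 : m1 > m2) (h2pos : m2 > 0)
    (e : Fin n → ℝ) (he : e = fun _ => 1)
    (J : Matrix (Fin n) (Fin n) ℝ) (hJ : J = Matrix.of fun _ _ => 1)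
    (Y11 Y12 Y22 : Matrix (Fin n) (Fin n) ℝ)
    (Y : Matrix (Fin n ⊕ Fin n) (Fin n ⊕ Fin n) ℝ)
    (hY : Y = Matrix.fromBlocks Y11 Y12 Y12ᵀ Y22)
    (hYsymm : Y.IsSymm)
    (htr11 : Matrix.trace Y11 = m1) (htr22 : Matrix.trace Y22 = m2)
    (htrJ11 : Matrix.trace (J * Y11) = m1 ^ 2)
    (htrJ22 : Matrix.trace (J * Y22) = m2 ^ 2)
    (hdiag12 : Y12.diag = 0)
    (htrJ12 : Matrix.trace (J * (Y12 + Y12ᵀ)) = 2 * m1 * m2)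
    (hpsd : (Y - vecMulVec Y.diag Y.diag).PosSemidef)
    (hnonneg : ∀ i j, 0 ≤ Y i j)
    (X : Matrix (Fin n) (Fin n) ℝ) (hX : X = Y11)
    (x : Fin n → ℝ) (hx : x = Y11.diag) :
    X.IsSymm ∧
    e ⬝ᵥ x = m1 ∧
    Matrix.trace (J * X) = m1 ^ 2 ∧
    X *ᵥ e = m1 • x ∧
    (∀ i j, 0 ≤ X i j) ∧
    (∀ i j, 0 ≤ (vecMulVec x e - X) i j) ∧
    (∀ i j, 0 ≤ (J + X - vecMulVec x e - vecMulVec e x) i j) ∧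
    X.PosSemidef ∧
    Y11 + Y22 = (2 : ℝ) • X + J - vecMulVec x e - vecMulVec e x := by
  subst he hJ hX hx hY
  -- block symmetry
  have hsym11 : Xᵀ = X := by
    have h := congrArg Matrix.toBlocks₁₁ hYsymm
    simpa [Matrix.IsSymm, Matrix.fromBlocks_transpose, Matrix.toBlocks_fromBlocks₁₁] using h
  have hsym22 : Y22ᵀ = Y22 := by
    have h := congrArg Matrix.toBlocks₂₂ hYsymm
    simpa [Matrix.IsSymm, Matrix.fromBlocks_transpose, Matrix.toBlocks_fromBlocks₂₂] using h
  -- entrywise nonnegativity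
  have h11 : ∀ i j, 0 ≤ X i j := fun i j => by simpa using hnonneg (Sum.inl i) (Sum.inl j)
  have h12n : ∀ i j, 0 ≤ Y12 i j := fun i j => by simpa using hnonneg (Sum.inl i) (Sum.inr j)
  have h22 : ∀ i j, 0 ≤ Y22 i j := fun i j => by simpa using hnonneg (Sum.inr i) (Sum.inr j)
  have hd12 : ∀ i, Y12 i i = 0 := fun i => congrFun hdiag12 i
  -- trace facts
  have htr11' : ∑ i, X i i = m1 := by
    simpa [Matrix.trace, Matrix.diag] using htr11
  have htr22' : ∑ i, Y22 i i = m2 := by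
    simpa [Matrix.trace, Matrix.diag] using htr22
  have hJ11 : ∑ i, ∑ j, X j i = m1 ^ 2 := by
    simpa [Matrix.trace, Matrix.diag, Matrix.mul_apply] using htrJ11
  have hJ22 : ∑ i, ∑ j, Y22 j i = m2 ^ 2 := by
    simpa [Matrix.trace, Matrix.diag, Matrix.mul_apply] using htrJ22
  have hJ12 : ∑ i, ∑ j, Y12 i j = m1 * m2 := by
    have h := htrJ12
    simp only [Matrix.trace, Matrix.diag, Matrix.mul_apply, Matrix.add_apply,
      Matrix.transpose_apply, Matrix.of_apply, one_mul, Finset.sum_add_distrib] at h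
    rw [Finset.sum_comm (f := fun i j => Y12 j i)] at h
    linarith
  have hs_le : ∀ i, X i i + Y22 i i ≤ 1 := by
    intro i
    have hq := hpsd.dotProduct_mulVec_nonneg (Sum.elim (Pi.single i 1) (Pi.single i 1))
    simp only [star_trivial, Matrix.sub_mulVec, dotProduct_sub, Matrix.mulVec, dotProduct,
      Fintype.sum_sum_type, Sum.elim_inl, Sum.elim_inr, Matrix.fromBlocks_apply₁₁,
      Matrix.fromBlocks_apply₁₂, Matrix.fromBlocks_apply₂₁, Matrix.fromBlocks_apply₂₂,
      Matrix.vecMulVec_apply, Matrix.diag_apply, Pi.single_apply, mul_ite, ite_mul,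
      mul_one, mul_zero, zero_mul, one_mul, Finset.sum_ite_eq', Finset.mem_univ, if_true,
      Matrix.transpose_apply, Matrix.sub_apply] at hq
    rw [hd12 i] at hq
    nlinarith [h11 i i, h22 i i, hq]
  have hs_sum : ∑ i, (X i i + Y22 i i) = (n : ℝ) := by
    rw [Finset.sum_add_distrib, htr11', htr22']; linarith
  have hs1 : ∀ i, X i i + Y22 i i = 1 := by
    intro i
    have h := (Finset.sum_eq_sum_iff_of_le (s := Finset.univ)
      (f := fun i => X i i + Y22 i i) (g := fun _ => (1:ℝ)) (fun j _ => hs_le j)).mp (by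
        simpa using hs_sum)
    exact h i (Finset.mem_univ i)
  -- kernel vectors (single)
  have hker : ∀ i : Fin n,
      (Matrix.fromBlocks X Y12 Y12ᵀ Y22 -
        vecMulVec (Matrix.fromBlocks X Y12 Y12ᵀ Y22).diag
          (Matrix.fromBlocks X Y12 Y12ᵀ Y22).diag) *ᵥ
        (Sum.elim (Pi.single i 1) (Pi.single i 1)) = 0 := by
    intro i
    refine (hpsd.dotProduct_mulVec_zero_iff _).mp ?_
    simp only [star_trivial, Matrix.sub_mulVec, dotProduct_sub, Matrix.mulVec, dotProduct,
      Fintype.sum_sum_type, Sum.elim_inl, Sum.elim_inr, Matrix.fromBlocks_apply₁₁,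
      Matrix.fromBlocks_apply₁₂, Matrix.fromBlocks_apply₂₁, Matrix.fromBlocks_apply₂₂,
      Matrix.vecMulVec_apply, Matrix.diag_apply, Pi.single_apply, mul_ite, ite_mul,
      mul_one, mul_zero, zero_mul, one_mul, Finset.sum_ite_eq', Finset.mem_univ, if_true,
      Matrix.transpose_apply, Matrix.sub_apply]
    rw [hd12 i]
    nlinarith [hs1 i]
  have hA : ∀ i j, X j i + Y12 j i = X j j := by
    intro i j
    have h := congrFun (hker i) (Sum.inl j)
    simp only [Matrix.sub_mulVec, Matrix.mulVec, dotProduct, Fintype.sum_sum_type,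
      Sum.elim_inl, Sum.elim_inr, Matrix.fromBlocks_apply₁₁, Matrix.fromBlocks_apply₁₂,
      Matrix.fromBlocks_apply₂₁, Matrix.fromBlocks_apply₂₂, Matrix.vecMulVec_apply, Matrix.diag_apply, Pi.single_apply, mul_ite, ite_mul,
      mul_one, mul_zero, zero_mul, one_mul, Finset.sum_ite_eq', Finset.mem_univ, if_true,
      Matrix.transpose_apply, Matrix.sub_apply, Pi.sub_apply, Pi.zero_apply] at h
    linear_combination h + X j j * hs1 i
  have hB : ∀ i j, Y12 i j + Y22 j i = Y22 j j := by
    intro i j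
    have h := congrFun (hker i) (Sum.inr j)
    simp only [Matrix.sub_mulVec, Matrix.mulVec, dotProduct, Fintype.sum_sum_type,
      Sum.elim_inl, Sum.elim_inr, Matrix.fromBlocks_apply₁₁, Matrix.fromBlocks_apply₁₂,
      Matrix.fromBlocks_apply₂₁, Matrix.fromBlocks_apply₂₂, Matrix.vecMulVec_apply, Matrix.diag_apply, Pi.single_apply, mul_ite, ite_mul,
      mul_one, mul_zero, zero_mul, one_mul, Finset.sum_ite_eq', Finset.mem_univ, if_true,
      Matrix.transpose_apply, Matrix.sub_apply, Pi.sub_apply, Pi.zero_apply] at h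
    linear_combination h + Y22 j j * hs1 i
  have hkerw :
      (Matrix.fromBlocks X Y12 Y12ᵀ Y22 -
        vecMulVec (Matrix.fromBlocks X Y12 Y12ᵀ Y22).diag
          (Matrix.fromBlocks X Y12 Y12ᵀ Y22).diag) *ᵥ
        (Sum.elim (fun _ => (1:ℝ)) (fun _ => (-1:ℝ))) = 0 := by
    refine (hpsd.dotProduct_mulVec_zero_iff _).mp ?_
    simp only [star_trivial, Matrix.sub_mulVec, dotProduct_sub, Matrix.mulVec, dotProduct,
      Fintype.sum_sum_type, Sum.elim_inl, Sum.elim_inr, Matrix.fromBlocks_apply₁₁,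
      Matrix.fromBlocks_apply₁₂, Matrix.fromBlocks_apply₂₁, Matrix.fromBlocks_apply₂₂,
      Matrix.vecMulVec_apply, Matrix.diag_apply, mul_one, mul_neg, neg_mul, one_mul,
      neg_neg, Matrix.transpose_apply, Matrix.sub_apply]
    have hJ11' : ∑ i, ∑ j, X i j = m1 ^ 2 := Finset.sum_comm.trans hJ11
    have hJ22' : ∑ i, ∑ j, Y22 i j = m2 ^ 2 := Finset.sum_comm.trans hJ22
    have hJ12' : ∑ i, ∑ j, Y12 j i = m1 * m2 := by rw [Finset.sum_comm]; exact hJ12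
    simp only [Finset.sum_sub_distrib, Finset.sum_neg_distrib, Finset.sum_add_distrib,
      ← Finset.mul_sum, ← Finset.sum_mul, htr11', htr22', hJ11', hJ22', hJ12', hJ12]
    ring
  have hA' : ∀ i j, X i j + Y12 i j = X i i := fun i j => hA j i
  have hrow : ∀ i, ∑ j, X i j = m1 * X i i := by
    intro i
    have h := congrFun hkerw (Sum.inl i)
    simp only [Matrix.sub_mulVec, Matrix.mulVec, dotProduct, Fintype.sum_sum_type,
      Sum.elim_inl, Sum.elim_inr, Matrix.fromBlocks_apply₁₁, Matrix.fromBlocks_apply₁₂,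
      Matrix.fromBlocks_apply₂₁, Matrix.fromBlocks_apply₂₂, Matrix.vecMulVec_apply,
      Matrix.diag_apply, mul_one, mul_neg, neg_mul, one_mul, neg_neg,
      Matrix.transpose_apply, Matrix.sub_apply, Pi.zero_apply, Finset.sum_sub_distrib,
      Finset.sum_neg_distrib, ← Finset.mul_sum, htr11', htr22'] at h
    have h2 : ∑ j, (X i j + Y12 i j) = (n : ℝ) * X i i := by
      rw [Finset.sum_congr rfl (fun j _ => hA' i j)]
      simp [Finset.sum_const, Finset.card_univ, mul_comm]
    rw [Finset.sum_add_distrib] at h2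
    linear_combination h / 2 + h2 / 2 - (X i i / 2) * hm
  have hsy22 : ∀ i j, Y22 j i = Y22 i j := fun i j => by
    simpa using congrFun (congrFun hsym22 i) j
  refine ⟨hsym11, ?_, htrJ11, ?_, h11, ?_, ?_, ?_, ?_⟩
  · simp only [dotProduct, Matrix.diag_apply, one_mul]
    exact htr11'
  · funext i
    simp only [Matrix.mulVec, dotProduct, mul_one, Pi.smul_apply, Matrix.diag_apply,
      smul_eq_mul]
    exact hrow i
  · intro i j
    simp only [Matrix.sub_apply, Matrix.vecMulVec_apply, Matrix.diag_apply, mul_one]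
    linarith [hA' i j, h12n i j]
  · intro i j
    simp only [Matrix.sub_apply, Matrix.add_apply, Matrix.vecMulVec_apply,
      Matrix.diag_apply, Matrix.of_apply, mul_one, one_mul]
    linarith [hA' i j, hB i j, hs1 j, h22 j i]
  · refine Matrix.PosSemidef.of_dotProduct_mulVec_nonneg ?_ ?_
    · show Xᴴ = X
      ext i j
      simp only [Matrix.conjTranspose_apply, star_trivial]
      exact (by simpa using congrFun (congrFun hsym11 j) i : X i j = X j i).symm
    · intro u
      have hq := hpsd.dotProduct_mulVec_nonneg (Sum.elim u 0)
      simp only [star_trivial, Matrix.sub_mulVec, dotProduct_sub, Matrix.mulVec, dotProduct,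
        Fintype.sum_sum_type, Sum.elim_inl, Sum.elim_inr, Matrix.fromBlocks_apply₁₁,
        Matrix.fromBlocks_apply₁₂, Matrix.fromBlocks_apply₂₁, Matrix.fromBlocks_apply₂₂,
        Matrix.vecMulVec_apply, Matrix.diag_apply, mul_zero, zero_mul, mul_one,
        Matrix.transpose_apply, Matrix.sub_apply, Pi.zero_apply, Finset.sum_const_zero,
        add_zero, zero_add] at hq
      simp only [star_trivial, Matrix.mulVec, dotProduct]
      set t := ∑ y, X y y * u y with ht
      have hrw : ∀ a : Fin n, u a * ∑ b, (X a b - X a a * X b b) * u b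
          = u a * ∑ b, X a b * u b - u a * X a a * t := by
        intro a
        have h1 : ∑ b, (X a b - X a a * X b b) * u b
            = (∑ b, X a b * u b) - X a a * t := by
          rw [ht, Finset.mul_sum, ← Finset.sum_sub_distrib]
          exact Finset.sum_congr rfl (fun b _ => by ring)
        rw [h1]; ring
      rw [Finset.sum_congr rfl (fun a _ => hrw a), Finset.sum_sub_distrib,
        ← Finset.sum_mul] at hq
      have ht2 : ∑ a, u a * X a a = t := by
        rw [ht]; exact Finset.sum_congr rfl (fun a _ => mul_comm _ _)
      rw [ht2] at hq
      nlinarith [hq, mul_self_nonneg t]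
  · ext i j
    simp only [Matrix.add_apply, Matrix.sub_apply, Matrix.smul_apply, Matrix.of_apply,
      Matrix.vecMulVec_apply, Matrix.diag_apply, smul_eq_mul, mul_one, one_mul]
    linarith [hA' i j, hB i j, hs1 j, hsy22 i j]
end

section
/- (Corollary, forward direction without nonnegativity.) Let m1 > m2 > 0 with m1 + m2 = n. Let X be a symmetric n×n matrix with x := diag(X) satisfying eᵀx = m1, tr(JX) = m1², Xe = m1·x, and X ⪰ 0 (no entrywise inequality constraints). Define Y with blocks Y11 := X, Y12 := x eᵀ − X, Y21 := e xᵀ − X, Y22 := J + X − x eᵀ − e xᵀ, and y := diag(Y) = (x, e − x). Then tr(Y11) = m1, tr(Y22) = m2, tr(J Y11) = m1², tr(J Y22) = m2², diag(Y12) = 0, tr(J(Y12 + Y12ᵀ)) = 2 m1 m2, and Y − y yᵀ ⪰ 0; i.e., Y satisfies all constraints of the vector-lifting relaxation (3) except possibly entrywise nonnegativity. -/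
open Matrix BigOperators

/-- Corollary, forward direction without nonnegativity:
If `X ⪰ 0` is symmetric with `x = diag X`, `eᵀ x = m1`, `tr (J X) = m1²` and
`X e = m1 x`, then the block matrix
`Y = [[X, x eᵀ - X], [e xᵀ - X, J + X - x eᵀ - e xᵀ]]` with `y = diag Y = (x, e - x)`
satisfies all constraints of the vector-lifting relaxation (3) except possibly
entrywise nonnegativity. -/
theorem simplified_to_vector_lifting_no_nonneg
    (n : ℕ) (hn : 0 < n) (m1 m2 : ℝ)
    (hm : m1 + m2 = n) (h12 : m1 > m2) (h2pos : m2 > 0)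
    (e : Fin n → ℝ) (he : e = fun _ => 1)
    (J : Matrix (Fin n) (Fin n) ℝ) (hJ : J = Matrix.of fun _ _ => 1)
    (X : Matrix (Fin n) (Fin n) ℝ) (hXsymm : X.IsSymm)
    (x : Fin n → ℝ) (hx : x = X.diag)
    (hsum : e ⬝ᵥ x = m1)
    (htrJ : Matrix.trace (J * X) = m1 ^ 2)
    (hrow : X *ᵥ e = m1 • x)
    (hXpsd : X.PosSemidef)
    (Y : Matrix (Fin n ⊕ Fin n) (Fin n ⊕ Fin n) ℝ)
    (hY : Y = Matrix.fromBlocks X (vecMulVec x e - X) (vecMulVec e x - X)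
      (J + X - vecMulVec x e - vecMulVec e x)) :
    Y.IsSymm ∧
    Y.diag = Sum.elim x (e - x) ∧
    Matrix.trace X = m1 ∧
    Matrix.trace (J + X - vecMulVec x e - vecMulVec e x) = m2 ∧
    Matrix.trace (J * X) = m1 ^ 2 ∧
    Matrix.trace (J * (J + X - vecMulVec x e - vecMulVec e x)) = m2 ^ 2 ∧
    (vecMulVec x e - X).diag = 0 ∧
    Matrix.trace (J * ((vecMulVec x e - X) + (vecMulVec x e - X)ᵀ)) = 2 * m1 * m2 ∧
    (Y - vecMulVec Y.diag Y.diag).PosSemidef := by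
  have hXs : ∀ i j, X j i = X i j := fun i j => by
    conv_lhs => rw [← hXsymm]
    rfl
  have hs : ∑ i, x i = m1 := by
    simpa [dotProduct, he] using hsum
  have hS : ∑ i, ∑ j, X j i = m1 ^ 2 := by
    simpa [Matrix.trace, Matrix.mul_apply, Matrix.diag, hJ] using htrJ
  have hm2 : m2 = (n : ℝ) - m1 := by linarith
  have hd : ∀ i, X i i = x i := fun i => by rw [hx]; rfl
  -- row sums
  have hrow' : ∀ i, ∑ j, X i j = m1 * x i := by
    intro i
    have := congrFun hrow i
    simpa [Matrix.mulVec, dotProduct, he] using this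
  have hcol : ∀ i, ∑ j, X j i = m1 * x i := by
    intro i
    rw [← hrow' i]
    exact Finset.sum_congr rfl fun j _ => hXs i j
  have hS2 : ∑ i, ∑ j, X i j = m1 ^ 2 := by
    simp only [hrow', ← Finset.mul_sum, hs]
    ring
  -- diag
  have hdiagY : Y.diag = Sum.elim x (e - x) := by
    funext i
    cases i with
    | inl i => simp [hY, Matrix.diag, hx]
    | inr i =>
      simp [hY, Matrix.diag, hJ, vecMulVec_apply, he, hx]
      try ring
  refine ⟨?_, hdiagY, ?_, ?_, htrJ, ?_, ?_, ?_, ?_⟩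
  · -- symmetry
    rw [hY, Matrix.IsSymm]
    ext i j
    cases i <;> cases j <;>
      simp [Matrix.transpose_apply, vecMulVec_apply, hJ, he, hXs, mul_comm] <;>
      try ring
  · -- trace X = m1
    simp only [Matrix.trace, Matrix.diag, hd, hs]
  · -- trace Y22 = m2
    have : Matrix.trace (J + X - vecMulVec x e - vecMulVec e x)
        = ∑ i, (1 + x i - x i - x i) := by
      simp [Matrix.trace, Matrix.diag, hJ, vecMulVec_apply, he, hd]
    rw [this]
    simp only [Finset.sum_sub_distrib, Finset.sum_add_distrib, Finset.sum_const,
      Finset.card_univ, Fintype.card_fin, nsmul_eq_mul, hs, mul_one]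
    rw [hm2]; ring
  · -- trace (J * Y22) = m2^2
    have : Matrix.trace (J * (J + X - vecMulVec x e - vecMulVec e x))
        = ∑ i, ∑ j, (1 + X j i - x j - x i) := by
      simp [Matrix.trace, Matrix.mul_apply, Matrix.diag, hJ, vecMulVec_apply, he,
        Matrix.add_apply, Matrix.sub_apply]
    rw [this]
    simp only [Finset.sum_sub_distrib, Finset.sum_add_distrib, Finset.sum_const,
      Finset.card_univ, Fintype.card_fin, nsmul_eq_mul, hs, hS, mul_one, ← Finset.mul_sum]
    rw [hm2]; ring
  · -- diag of Y12 = 0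
    funext i
    simp [Matrix.diag, vecMulVec_apply, he, hx]
  · -- trace (J * (Y12 + Y12ᵀ)) = 2 m1 m2
    have : Matrix.trace (J * ((vecMulVec x e - X) + (vecMulVec x e - X)ᵀ))
        = ∑ i, ∑ j, ((x j - X j i) + (x i - X i j)) := by
      simp [Matrix.trace, Matrix.mul_apply, Matrix.diag, hJ, vecMulVec_apply, he,
        Matrix.add_apply, Matrix.sub_apply, Matrix.transpose_apply]
    rw [this]
    simp only [Finset.sum_sub_distrib, Finset.sum_add_distrib, Finset.sum_const,
      Finset.card_univ, Fintype.card_fin, nsmul_eq_mul, hs, hS, hS2, ← Finset.mul_sum]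
    rw [hm2]; ring
  · -- PSD part
    have hm1pos : (0:ℝ) < m1 := lt_trans h2pos h12
    set M : Matrix (Fin n) (Fin n) ℝ := X - vecMulVec x x with hM
    have hMpsd : M.PosSemidef := by
      refine Matrix.PosSemidef.of_dotProduct_mulVec_nonneg ?_ ?_
      · rw [Matrix.IsHermitian, Matrix.conjTranspose]
        ext i j
        simp [hM, Matrix.sub_apply, vecMulVec_apply, hXs, mul_comm]
      · intro v
        have key : (x ⬝ᵥ v) ^ 2 ≤ v ⬝ᵥ X *ᵥ v := by
          -- Cauchy-Schwarz via discriminant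
          have hq : ∀ t : ℝ, 0 ≤ (v ⬝ᵥ X *ᵥ v) * (t * t) + (2 * (m1 * (x ⬝ᵥ v))) * t + m1 ^ 2 := by
            intro t
            have := hXpsd.dotProduct_mulVec_nonneg (t • v + e)
            have hXv : e ⬝ᵥ X *ᵥ v = m1 * (x ⬝ᵥ v) := by
              have h1 : e ᵥ* X = m1 • x := by
                rw [← Matrix.mulVec_transpose, hXsymm.eq, hrow]
              calc e ⬝ᵥ X *ᵥ v = (e ᵥ* X) ⬝ᵥ v := (Matrix.dotProduct_mulVec e X v).symm ▸ rfl
                _ = m1 * (x ⬝ᵥ v) := by rw [h1, smul_dotProduct, smul_eq_mul]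
            have hvXe : v ⬝ᵥ X *ᵥ e = m1 * (x ⬝ᵥ v) := by
              rw [hrow, dotProduct_smul, smul_eq_mul, dotProduct_comm]
            have heXe : e ⬝ᵥ X *ᵥ e = m1 ^ 2 := by
              rw [hrow, dotProduct_smul, smul_eq_mul, hsum]; ring
            rw [star_trivial] at this
            simp only [Matrix.mulVec_add, Matrix.mulVec_smul, add_dotProduct,
              smul_dotProduct, dotProduct_add, dotProduct_smul,
              smul_eq_mul, hXv, hvXe, heXe] at this
            nlinarith [this]
          have hd := discrim_le_zero hq
          rw [discrim] at hd
          have h4 : (0:ℝ) < 4 * m1 ^ 2 := by positivity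
          nlinarith [hd, h4]
        have hvv : v ⬝ᵥ (vecMulVec x x) *ᵥ v = (x ⬝ᵥ v) * (x ⬝ᵥ v) := by
          simp only [dotProduct, Matrix.mulVec, dotProduct, vecMulVec_apply]
          rw [Finset.sum_mul]
          refine Finset.sum_congr rfl fun i _ => ?_
          rw [Finset.mul_sum, Finset.mul_sum]
          exact Finset.sum_congr rfl fun j _ => by ring
        have hform : v ⬝ᵥ M *ᵥ v = v ⬝ᵥ X *ᵥ v - (x ⬝ᵥ v) ^ 2 := by
          rw [hM, Matrix.sub_mulVec, dotProduct_sub, hvv]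
          ring
        rw [star_trivial, hform]
        linarith [key]
    -- Y - yyᵀ = Bᴴ M B with B = [1, -1]
    have hZ : Y - vecMulVec Y.diag Y.diag
        = (Matrix.fromCols (1 : Matrix (Fin n) (Fin n) ℝ) (-1))ᴴ * M
          * Matrix.fromCols (1 : Matrix (Fin n) (Fin n) ℝ) (-1) := by
      rw [Matrix.conjTranspose_fromCols_eq_fromRows_conjTranspose,
        Matrix.fromRows_mul, Matrix.fromRows_mul_fromCols]
      simp only [Matrix.conjTranspose_one, Matrix.conjTranspose_neg, Matrix.one_mul,
        Matrix.neg_mul, Matrix.mul_one, Matrix.mul_neg, neg_neg]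
      rw [hdiagY, hY]
      ext i j
      cases i <;> cases j <;>
        simp [Matrix.fromBlocks, Matrix.sub_apply, vecMulVec_apply, hM, hJ, he,
          Matrix.add_apply, Matrix.neg_apply] <;> ring
    rw [hZ]
    exact hMpsd.conjTranspose_mul_mul_same _
end

section
/- Let Y be a symmetric 2n×2n matrix with blocks [[Y11, Y12],[Y12ᵀ, Y22]], y := diag(Y), y1 := diag(Y11), such that Y − y yᵀ ⪰ 0, tr(Y11) = m1 and tr(J Y11) = m1². Then (Y11 − y1 y1ᵀ) e = 0, i.e., Y11 e = m1 y1. -/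
open Matrix BigOperators

private lemma vmv_mulVec_s12 {ι : Type*} [Fintype ι] (a b x : ι → ℝ) :
    Matrix.vecMulVec a b *ᵥ x = (b ⬝ᵥ x) • a := by
  funext i
  simp [Matrix.vecMulVec_apply, Matrix.mulVec, dotProduct, Finset.mul_sum,
    mul_assoc, mul_comm, mul_left_comm]

/-- If `Y = [[Y11, Y12], [Y12ᵀ, Y22]]` is symmetric with
`y = diag Y`, `Y - y yᵀ ⪰ 0`, `tr Y11 = m1` and `tr (J Y11) = m1²`, then
`(Y11 - y1 y1ᵀ) e = 0`, i.e., `Y11 e = m1 y1` where `y1 = diag Y11`. -/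
theorem row_sum_eq_of_psd
    (n : ℕ) (hn : 0 < n) (m1 : ℝ)
    (e : Fin n → ℝ) (he : e = fun _ => 1)
    (J : Matrix (Fin n) (Fin n) ℝ) (hJ : J = Matrix.of fun _ _ => 1)
    (Y11 Y12 Y22 : Matrix (Fin n) (Fin n) ℝ)
    (Y : Matrix (Fin n ⊕ Fin n) (Fin n ⊕ Fin n) ℝ)
    (hY : Y = Matrix.fromBlocks Y11 Y12 Y12ᵀ Y22)
    (hYsymm : Y.IsSymm)
    (y1 : Fin n → ℝ) (hy1 : y1 = Y11.diag)
    (hpsd : (Y - vecMulVec Y.diag Y.diag).PosSemidef)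
    (htr : Matrix.trace Y11 = m1)
    (htrJ : Matrix.trace (J * Y11) = m1 ^ 2) :
    (Y11 - vecMulVec y1 y1) *ᵥ e = 0 ∧ Y11 *ᵥ e = m1 • y1 := by
  set v : Fin n ⊕ Fin n → ℝ := Sum.elim e 0 with hv
  have hdiag : Y.diag = Sum.elim y1 Y22.diag := by
    funext i
    cases i <;> simp [hY, Matrix.diag, hy1]
  have hsum1 : y1 ⬝ᵥ e = m1 := by
    rw [← htr]
    simp [Matrix.trace, dotProduct, he, hy1]
  have hsum2 : e ⬝ᵥ (Y11 *ᵥ e) = m1 ^ 2 := by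
    rw [← htrJ]
    simp [Matrix.trace, dotProduct, Matrix.mulVec, Matrix.mul_apply,
      Matrix.diag, he, hJ]
    rw [Finset.sum_comm]
  have hMv : (Y - vecMulVec Y.diag Y.diag) *ᵥ v = 0 := by
    rw [← hpsd.dotProduct_mulVec_zero_iff]
    rw [Matrix.sub_mulVec, dotProduct_sub]
    have h1 : Y *ᵥ v = Sum.elim (Y11 *ᵥ e) (Y12ᵀ *ᵥ e) := by
      rw [hY, hv]
      rw [Matrix.fromBlocks_mulVec]
      simp
    have h2 : (vecMulVec Y.diag Y.diag) *ᵥ v = (y1 ⬝ᵥ e) • Y.diag := by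
      rw [vmv_mulVec_s12]
      congr 1
      rw [hdiag, hv]
      simp [dotProduct]
    rw [h1, h2, hdiag]
    have : star v = v := by funext i; simp
    rw [this, hv, hsum1]
    simp only [dotProduct, Fintype.sum_sum_type, Sum.elim_inl, Sum.elim_inr,
      Pi.zero_apply, zero_mul, Finset.sum_const_zero, add_zero, Pi.smul_apply, smul_eq_mul]
    have hA : ∑ x : Fin n, e x * (Y11 *ᵥ e) x = m1 ^ 2 := hsum2
    have hB : ∑ x : Fin n, e x * (m1 * y1 x) = m1 ^ 2 := by
      have : ∑ x : Fin n, e x * (m1 * y1 x) = m1 * (y1 ⬝ᵥ e) := by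
        simp [dotProduct, Finset.mul_sum]; ring_nf
        exact Finset.sum_congr rfl fun x _ => by ring
      rw [this, hsum1, sq]
    rw [hA]
    rw [← hB]
    rw [← Finset.sum_sub_distrib]
    simp
  have key : (Y11 - vecMulVec y1 y1) *ᵥ e = 0 := by
    funext i
    have := congrFun hMv (Sum.inl i)
    simpa [hY, hdiag, hv, hy1, Matrix.sub_mulVec, Matrix.fromBlocks_mulVec,
      vmv_mulVec_s12, Matrix.mulVec, dotProduct, Matrix.vecMulVec_apply,
      Finset.sum_sub_distrib, Finset.mul_sum] using this
  refine ⟨key, ?_⟩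
  have := key
  rw [Matrix.sub_mulVec, sub_eq_zero] at this
  rw [this, vmv_mulVec_s12, hsum1]
end

section
/- (Strict feasibility of (8).) Let m1, m2 be integers with m1 > m2 ≥ 1 and n = m1 + m2. Then the matrix X̂ := (m1/n)·I + (m1(m1−1))/(n(n−1))·(J − I) is feasible for the simplified relaxation (8), and X̂ is positive definite; moreover its eigenvalues are m1·m2/(n(n−1)) (with multiplicity n−1) and m1²/n. Hence the relaxation (8) has a strictly feasible point. -/
open Matrix BigOperators

set_option maxHeartbeats 1000000 in
/-- Strict feasibility of (8): For integers `m1 > m2 ≥ 1` and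
`n = m1 + m2`, the matrix `X̂ = (m1/n) I + (m1 (m1 - 1))/(n (n - 1)) (J - I)` is
feasible for the simplified relaxation (8) and positive definite; its eigenvalues
are `m1 m2 / (n (n - 1))` on the orthogonal complement of `e` (multiplicity
`n - 1`) and `m1² / n` on the span of `e`. -/
theorem strictly_feasible_point
    (m1 m2 : ℕ) (hm2 : 1 ≤ m2) (h12 : m2 < m1)
    (n : ℕ) (hn : n = m1 + m2)
    (e : Fin n → ℝ) (he : e = fun _ => 1)
    (J : Matrix (Fin n) (Fin n) ℝ) (hJ : J = Matrix.of fun _ _ => 1)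
    (Xhat : Matrix (Fin n) (Fin n) ℝ)
    (hXhat : Xhat = ((m1 : ℝ) / (n : ℝ)) • (1 : Matrix (Fin n) (Fin n) ℝ)
      + ((m1 : ℝ) * ((m1 : ℝ) - 1) / ((n : ℝ) * ((n : ℝ) - 1))) • (J - 1)) :
    Xhat.IsSymm ∧
    e ⬝ᵥ Xhat.diag = m1 ∧
    Matrix.trace (J * Xhat) = (m1 : ℝ) ^ 2 ∧
    Xhat *ᵥ e = (m1 : ℝ) • Xhat.diag ∧
    (∀ i j, 0 ≤ Xhat i j) ∧
    (∀ i j, 0 ≤ (vecMulVec Xhat.diag e - Xhat) i j) ∧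
    (∀ i j, 0 ≤ (J + Xhat - vecMulVec Xhat.diag e - vecMulVec e Xhat.diag) i j) ∧
    Xhat.PosDef ∧
    Xhat *ᵥ e = ((m1 : ℝ) ^ 2 / (n : ℝ)) • e ∧
    (∀ v : Fin n → ℝ, v ⬝ᵥ e = 0 →
      Xhat *ᵥ v = ((m1 : ℝ) * (m2 : ℝ) / ((n : ℝ) * ((n : ℝ) - 1))) • v) := by
  set a : ℝ := (m1 : ℝ) / (n : ℝ) with ha_def
  set b : ℝ := (m1 : ℝ) * ((m1 : ℝ) - 1) / ((n : ℝ) * ((n : ℝ) - 1)) with hb_def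
  -- basic numeric facts
  have hm1r : (2 : ℝ) ≤ (m1 : ℝ) := by exact_mod_cast (by omega : 2 ≤ m1)
  have hm2r : (1 : ℝ) ≤ (m2 : ℝ) := by exact_mod_cast hm2
  have hnr : (n : ℝ) = (m1 : ℝ) + (m2 : ℝ) := by rw [hn]; push_cast; ring
  have hnpos : (0 : ℝ) < (n : ℝ) := by rw [hnr]; linarith
  have hn1pos : (0 : ℝ) < (n : ℝ) - 1 := by rw [hnr]; linarith
  have hn0 : (n : ℝ) ≠ 0 := ne_of_gt hnpos
  have hn10 : (n : ℝ) - 1 ≠ 0 := ne_of_gt hn1pos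
  have hd1 : (0 : ℝ) < (m1 : ℝ) + (m2 : ℝ) := by linarith
  have hd2 : (0 : ℝ) < (m1 : ℝ) + (m2 : ℝ) - 1 := by linarith
  -- values of a, b
  have ha_pos : 0 < a := div_pos (by linarith) hnpos
  have hb_nonneg : 0 ≤ b := div_nonneg (by nlinarith) (by nlinarith)
  have han : a * (n : ℝ) = (m1 : ℝ) := by rw [ha_def]; field_simp
  have hma : (m1 : ℝ) * a = (m1 : ℝ) ^ 2 / (n : ℝ) := by rw [ha_def]; ring
  have hab : a - b = (m1 : ℝ) * (m2 : ℝ) / ((n : ℝ) * ((n : ℝ) - 1)) := by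
    rw [ha_def, hb_def, hnr]
    field_simp
    ring
  have hab_pos : 0 < a - b := by
    rw [hab]
    exact div_pos (by nlinarith) (by nlinarith)
  have hb_le_a : b ≤ a := by linarith
  have hsum : a + ((n : ℝ) - 1) * b = (m1 : ℝ) ^ 2 / (n : ℝ) := by
    rw [ha_def, hb_def]
    field_simp
    ring
  have ha1 : a ≤ 1 := by
    rw [ha_def, div_le_one hnpos, hnr]; linarith
  have key : 0 ≤ 1 + b - a - a := by
    have e1 : 1 + b - a - a
        = ((m2 : ℝ) * ((m2 : ℝ) - 1)) / (((m1 : ℝ) + (m2 : ℝ)) * ((m1 : ℝ) + (m2 : ℝ) - 1)) := by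
      rw [ha_def, hb_def, hnr]
      field_simp
      ring
    rw [e1]
    apply div_nonneg (by nlinarith) (by nlinarith)
  -- entries of Xhat
  have hE : ∀ i j, Xhat i j = if i = j then a else b := by
    intro i j
    simp only [hXhat, hJ, Matrix.add_apply, Matrix.smul_apply, Matrix.sub_apply,
      Matrix.one_apply, Matrix.of_apply, smul_eq_mul]
    split <;> ring
  have hdiag : Xhat.diag = fun _ => a := by
    funext i; simp [Matrix.diag, hE i i]
  have hcard : (Finset.univ : Finset (Fin n)).card = n := by simp
  -- mulVec formula
  have hmv : ∀ (v : Fin n → ℝ) (i : Fin n),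
      (Xhat *ᵥ v) i = (a - b) * v i + b * ∑ j, v j := by
    intro v i
    simp only [Matrix.mulVec, dotProduct]
    have h1 : ∀ j, Xhat i j * v j = (a - b) * (if j = i then v j else 0) + b * v j := by
      intro j
      rw [hE i j]
      by_cases h : j = i
      · subst h; simp; ring
      · simp [h, Ne.symm h]
    rw [Finset.sum_congr rfl fun j _ => h1 j, Finset.sum_add_distrib,
      ← Finset.mul_sum, ← Finset.mul_sum, Finset.sum_ite_eq' Finset.univ i v]
    simp
  have hsym : Xhat.IsSymm := by
    ext i j
    simp only [Matrix.transpose_apply, hE]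
    by_cases h : i = j
    · subst h; rfl
    · rw [if_neg h, if_neg (Ne.symm h)]
  refine ⟨hsym, ?_, ?_, ?_, ?_, ?_, ?_, ?_, ?_, ?_⟩
  · -- e ⬝ diag = m1
    rw [he, hdiag]
    simp only [dotProduct, one_mul]
    rw [Finset.sum_const, hcard, nsmul_eq_mul]
    linarith [han]
  · -- trace
    have hJX : ∀ i : Fin n, (J * Xhat) i i = a + ((n : ℝ) - 1) * b := by
      intro i
      simp only [Matrix.mul_apply, hJ, Matrix.of_apply, one_mul]
      have h1 : ∀ k : Fin n, Xhat k i = (a - b) * (if k = i then 1 else 0) + b := by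
        intro k
        rw [hE k i]
        by_cases h : k = i
        · subst h; simp
        · simp [h, Ne.symm h]
      rw [Finset.sum_congr rfl fun k _ => h1 k, Finset.sum_add_distrib,
        ← Finset.mul_sum, Finset.sum_ite_eq' Finset.univ i (fun _ => (1 : ℝ))]
      simp [hcard]
      ring
    rw [Matrix.trace]
    simp only [Matrix.diag]
    rw [Finset.sum_congr rfl fun i _ => hJX i, Finset.sum_const, hcard, nsmul_eq_mul, hsum]
    field_simp
  · -- Xhat e = m1 • diag
    funext i
    rw [hmv e i, he, hdiag]
    simp only [Pi.smul_apply, smul_eq_mul, mul_one]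
    rw [Finset.sum_const, hcard, nsmul_eq_mul, mul_one]
    have h2 : a - b + b * (n : ℝ) = a + ((n : ℝ) - 1) * b := by ring
    rw [h2, hsum]
    linarith [hma]
  · -- entries nonneg
    intro i j
    rw [hE i j]
    split
    · exact ha_pos.le
    · exact hb_nonneg
  · -- diag eᵀ - X ≥ 0
    intro i j
    simp only [Matrix.sub_apply, Matrix.vecMulVec_apply, hdiag, he, mul_one]
    rw [hE i j]
    split
    · simp
    · linarith
  · -- J + X - diag eᵀ - e diagᵀ ≥ 0
    intro i j
    simp only [Matrix.sub_apply, Matrix.add_apply, Matrix.vecMulVec_apply, hdiag, he,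
      hJ, Matrix.of_apply, mul_one, one_mul]
    rw [hE i j]
    by_cases h : i = j
    · rw [if_pos h]; linarith
    · rw [if_neg h]; linarith
  · -- PosDef
    rw [Matrix.posDef_iff_dotProduct_mulVec]
    constructor
    · show Xhatᴴ = Xhat
      ext i j
      simp only [Matrix.conjTranspose_apply, star_trivial]
      exact congrFun (congrFun hsym i) j
    · intro x hx
      have hform : (star x) ⬝ᵥ (Xhat *ᵥ x)
          = (a - b) * ∑ i, x i ^ 2 + b * (∑ i, x i) ^ 2 := by
        simp only [dotProduct, star_trivial, Pi.star_apply]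
        have h1 : ∀ i : Fin n, x i * ((Xhat *ᵥ x) i)
            = (a - b) * x i ^ 2 + b * (x i * ∑ j, x j) := by
          intro i; rw [hmv x i]; ring
        rw [Finset.sum_congr rfl fun i _ => h1 i, Finset.sum_add_distrib,
          ← Finset.mul_sum, ← Finset.mul_sum, ← Finset.sum_mul, ← sq]
      rw [hform]
      have hx2 : 0 < ∑ i, x i ^ 2 := by
        rcases Function.ne_iff.mp hx with ⟨i, hi⟩
        have hi' : x i ≠ 0 := by simpa using hi
        have h0 : 0 < x i * x i := mul_self_pos.mpr hi'
        have : 0 < x i ^ 2 := by rw [sq]; exact h0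
        calc (0:ℝ) < x i ^ 2 := this
          _ ≤ ∑ j, x j ^ 2 :=
            Finset.single_le_sum (fun j _ => sq_nonneg (x j)) (Finset.mem_univ i)
      nlinarith [sq_nonneg (∑ i, x i)]
  · -- Xhat e = (m1²/n) e
    funext i
    rw [hmv e i, he]
    simp only [Pi.smul_apply, smul_eq_mul, mul_one]
    rw [Finset.sum_const, hcard, nsmul_eq_mul, mul_one]
    have h2 : a - b + b * (n : ℝ) = a + ((n : ℝ) - 1) * b := by ring
    rw [h2, hsum]
  · -- eigenvector on e⊥
    intro v hv
    have hsumv : ∑ j, v j = 0 := by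
      rw [he] at hv
      simpa [dotProduct] using hv
    funext i
    rw [hmv v i, hsumv, Pi.smul_apply, smul_eq_mul, ← hab]
    ring
end

section
/- (Redundancy of BQP inequalities on the second block.) Let m1 > m2 > 0 with m1 + m2 = n and let Y be feasible for the vector-lifting relaxation (3). Then for all indices i, j with n+1 ≤ i, j ≤ 2n and i ≠ j, the boolean quadric polytope inequality Y_{ii} + Y_{jj} ≤ 1 + Y_{ij} holds automatically; indeed, using Y22 = J + Y11 − y1 eᵀ − e y1ᵀ (which follows from feasibility), this inequality reduces exactly to the nonnegativity (Y11)_{i−n, j−n} ≥ 0. -/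
open Matrix BigOperators

/-- Redundancy of BQP inequalities on the second block: If `Y` is
feasible for the vector-lifting relaxation (3), then
`Y22 = J + Y11 - y1 eᵀ - e y1ᵀ`, and for all distinct indices `p, q` in the
second block the BQP inequality `Y22 p p + Y22 q q ≤ 1 + Y22 p q` holds
automatically; indeed it reduces exactly to the nonnegativity `0 ≤ Y11 p q`,
since `1 + Y22 p q - Y22 p p - Y22 q q = Y11 p q`. -/
theorem second_block_BQP_redundant
    (n : ℕ) (hn : 0 < n) (m1 m2 : ℝ)
    (hm : m1 + m2 = n) (h12 : m1 > m2) (h2pos : m2 > 0)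
    (e : Fin n → ℝ) (he : e = fun _ => 1)
    (J : Matrix (Fin n) (Fin n) ℝ) (hJ : J = Matrix.of fun _ _ => 1)
    (Y11 Y12 Y22 : Matrix (Fin n) (Fin n) ℝ)
    (Y : Matrix (Fin n ⊕ Fin n) (Fin n ⊕ Fin n) ℝ)
    (hY : Y = Matrix.fromBlocks Y11 Y12 Y12ᵀ Y22)
    (hYsymm : Y.IsSymm)
    (y1 : Fin n → ℝ) (hy1 : y1 = Y11.diag)
    (htr11 : Matrix.trace Y11 = m1) (htr22 : Matrix.trace Y22 = m2)
    (htrJ11 : Matrix.trace (J * Y11) = m1 ^ 2)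
    (htrJ22 : Matrix.trace (J * Y22) = m2 ^ 2)
    (hdiag12 : Y12.diag = 0)
    (htrJ12 : Matrix.trace (J * (Y12 + Y12ᵀ)) = 2 * m1 * m2)
    (hpsd : (Y - vecMulVec Y.diag Y.diag).PosSemidef)
    (hnonneg : ∀ i j, 0 ≤ Y i j) :
    Y22 = J + Y11 - vecMulVec y1 e - vecMulVec e y1 ∧
    (∀ p q : Fin n, p ≠ q →
      Y22 p p + Y22 q q ≤ 1 + Y22 p q ∧
      1 + Y22 p q - Y22 p p - Y22 q q = Y11 p q) := by
  set v : Fin n ⊕ Fin n → ℝ := Y.diag with hv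
  have hvl : ∀ i, v (Sum.inl i) = Y11 i i := by intro i; simp [hv, Matrix.diag, hY]
  have hvr : ∀ i, v (Sum.inr i) = Y22 i i := by intro i; simp [hv, Matrix.diag, hY]
  have h12diag : ∀ i, Y12 i i = 0 := by
    intro i; have := congrFun hdiag12 i; simpa [Matrix.diag] using this
  -- quadratic form
  have hvmv : ∀ u : Fin n ⊕ Fin n → ℝ, vecMulVec v v *ᵥ u = (v ⬝ᵥ u) • v := by
    intro u; ext i
    simp only [vecMulVec_apply, mulVec, dotProduct, Pi.smul_apply, smul_eq_mul,
      Finset.mul_sum]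
    rw [Finset.sum_mul]
    apply Finset.sum_congr rfl
    intro j _; ring
  have hquad : ∀ u : Fin n ⊕ Fin n → ℝ,
      u ⬝ᵥ ((Y - vecMulVec v v) *ᵥ u) = u ⬝ᵥ (Y *ᵥ u) - (v ⬝ᵥ u) ^ 2 := by
    intro u
    rw [sub_mulVec, dotProduct_sub, hvmv, dotProduct_smul]
    ring_nf
    rw [sq, dotProduct_comm u v]
  have hkey : ∀ u : Fin n ⊕ Fin n → ℝ, u ⬝ᵥ (Y *ᵥ u) = (v ⬝ᵥ u) ^ 2 →
      (Y - vecMulVec v v) *ᵥ u = 0 := by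
    intro u h
    have h2 := (hpsd.dotProduct_mulVec_zero_iff u)
    rw [star_trivial] at h2
    exact h2.mp (by rw [hquad u, h, sub_self])
  -- the vector e_i ⊕ e_i
  have hsq : ∀ i : Fin n, Y11 i i + Y22 i i ≤ 1 := by
    intro i
    have hp := hpsd.dotProduct_mulVec_nonneg (Sum.elim (Pi.single i (1:ℝ)) (Pi.single i 1))
    rw [star_trivial, hquad] at hp
    have hYu : (Sum.elim (Pi.single i (1:ℝ)) (Pi.single i 1)) ⬝ᵥ
        (Y *ᵥ Sum.elim (Pi.single i 1) (Pi.single i 1)) = Y11 i i + Y22 i i := by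
      rw [hY, fromBlocks_mulVec, sumElim_dotProduct_sumElim]
      simp [h12diag i]
    have hvu : v ⬝ᵥ (Sum.elim (Pi.single i (1:ℝ)) (Pi.single i 1)) = Y11 i i + Y22 i i := by
      simp [dotProduct, Fintype.sum_sum_type, dotProduct_single, hvl, hvr,
        Finset.sum_pi_single, Pi.single_apply, mul_ite, mul_one,
        mul_zero, Finset.sum_ite_eq', Finset.mem_univ, if_true]
    rw [hYu, hvu] at hp
    nlinarith [hp]
  have hsum : ∑ i : Fin n, (Y11 i i + Y22 i i) = ∑ _i : Fin n, (1:ℝ) := by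
    rw [Finset.sum_add_distrib]
    have : (Matrix.trace Y11) + Matrix.trace Y22 = m1 + m2 := by rw [htr11, htr22]
    simp only [Matrix.trace, Matrix.diag] at this
    simp [this, hm, Finset.card_univ]
  have hs1 : ∀ i : Fin n, Y11 i i + Y22 i i = 1 := by
    have := (Finset.sum_eq_sum_iff_of_le (s := Finset.univ)
      (fun i _ => hsq i)).mp hsum
    intro i; exact this i (Finset.mem_univ i)
  -- kernel vectors e_i ⊕ e_i
  have hker : ∀ i : Fin n, (Y - vecMulVec v v) *ᵥ (Sum.elim (Pi.single i 1) (Pi.single i 1)) = 0 := by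
    intro i
    apply hkey
    have hYu : (Sum.elim (Pi.single i (1:ℝ)) (Pi.single i 1)) ⬝ᵥ
        (Y *ᵥ Sum.elim (Pi.single i 1) (Pi.single i 1)) = Y11 i i + Y22 i i := by
      rw [hY, fromBlocks_mulVec, sumElim_dotProduct_sumElim]
      simp [h12diag i]
    have hvu : v ⬝ᵥ (Sum.elim (Pi.single i (1:ℝ)) (Pi.single i 1)) = Y11 i i + Y22 i i := by
      simp [dotProduct, Fintype.sum_sum_type, dotProduct_single, hvl, hvr,
        Finset.sum_pi_single, Pi.single_apply, mul_ite, mul_one,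
        mul_zero, Finset.sum_ite_eq', Finset.mem_univ, if_true]
    rw [hYu, hvu, hs1 i]; norm_num
  -- extract entrywise relations
  have R1 : ∀ p i : Fin n, Y11 p i + Y12 p i = Y11 p p := by
    intro p i
    have := congrFun (hker i) (Sum.inl p)
    rw [sub_mulVec, hvmv] at this
    have hvu : v ⬝ᵥ (Sum.elim (Pi.single i (1:ℝ)) (Pi.single i 1)) = 1 := by
      have : v ⬝ᵥ (Sum.elim (Pi.single i (1:ℝ)) (Pi.single i 1)) = Y11 i i + Y22 i i := by
        simp [dotProduct, Fintype.sum_sum_type, hvl, hvr, Finset.sum_pi_single, Pi.single_apply, mul_ite, mul_one,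
        mul_zero, Finset.sum_ite_eq', Finset.mem_univ, if_true]
      rw [this, hs1 i]
    rw [hvu] at this
    simp only [hY, fromBlocks_mulVec, Pi.sub_apply, Sum.elim_inl, Pi.zero_apply,
      one_smul, Pi.add_apply, mulVec_single] at this
    have hvlp := hvl p
    simp at this
    linarith [this, hvlp.symm ▸ (rfl : v (Sum.inl p) = v (Sum.inl p))]
  have R2 : ∀ p i : Fin n, Y12 i p + Y22 p i = Y22 p p := by
    intro p i
    have := congrFun (hker i) (Sum.inr p)
    rw [sub_mulVec, hvmv] at this
    have hvu : v ⬝ᵥ (Sum.elim (Pi.single i (1:ℝ)) (Pi.single i 1)) = 1 := by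
      have h' : v ⬝ᵥ (Sum.elim (Pi.single i (1:ℝ)) (Pi.single i 1)) = Y11 i i + Y22 i i := by
        simp [dotProduct, Fintype.sum_sum_type, hvl, hvr, Finset.sum_pi_single, Pi.single_apply,
          mul_ite, mul_one, mul_zero, Finset.sum_ite_eq', Finset.mem_univ, if_true]
      rw [h', hs1 i]
    rw [hvu] at this
    simp only [hY, fromBlocks_mulVec, Pi.sub_apply, Sum.elim_inr, Pi.zero_apply,
      one_smul, Pi.add_apply, mulVec_single] at this
    simp at this
    have hvrp := hvr p
    rw [hvrp] at this
    linarith [this]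
  have hsymm11 : ∀ p q : Fin n, Y11 q p = Y11 p q := by
    intro p q
    have := hYsymm.apply (Sum.inl p) (Sum.inl q)
    simpa [hY] using this
  have hY22 : ∀ p q : Fin n, Y22 p q = 1 + Y11 p q - Y11 p p - Y11 q q := by
    intro p q
    have h1 := R2 p q
    have h2 := R1 q p
    have h3 := hs1 p
    have h4 := hsymm11 p q
    linarith
  constructor
  · ext p q
    simp only [he, hJ, hy1, Matrix.sub_apply, Matrix.add_apply, vecMulVec_apply,
      Matrix.diag, Matrix.of_apply]
    have := hY22 p q
    ring_nf
    linarith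
  · intro p q hpq
    have h0 : 0 ≤ Y11 p q := by
      have := hnonneg (Sum.inl p) (Sum.inl q)
      simpa [hY] using this
    have e1 := hY22 p q
    have e2 := hs1 p
    have e3 := hs1 q
    exact ⟨by linarith, by linarith⟩
end

section
/- (Translation of mixed-block triangle inequalities.) Let m1 > m2 > 0 with m1 + m2 = n and let Y be feasible for the vector-lifting relaxation (3), with X := Y11. Then for indices 1 ≤ i ≤ n and n+1 ≤ j, k ≤ 2n with j ≠ k, writing p := j − n and q := k − n, the boolean quadric polytope inequality Y_{ik} + Y_{jk} ≤ Y_{kk} + Y_{ij} holds if and only if X_{ip} + X_{qp} ≤ X_{pp} + X_{iq}, i.e., it is equivalent to a triangle inequality on the first block X. -/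
open Matrix BigOperators

/-- Translation of mixed-block triangle inequalities: If `Y` is
feasible for the vector-lifting relaxation (3), with `X := Y11`, then for an
index `i` in the first block and distinct indices `p, q` in the second block
(corresponding to `j = n + p`, `k = n + q`), the BQP inequality
`Y i k + Y j k ≤ Y k k + Y i j` holds iff `X i p + X q p ≤ X p p + X i q`,
i.e., it is equivalent to a triangle inequality on the first block `X`. -/
theorem mixed_block_triangle_translation
    (n : ℕ) (hn : 0 < n) (m1 m2 : ℝ)
    (hm : m1 + m2 = n) (h12 : m1 > m2) (h2pos : m2 > 0)
    (e : Fin n → ℝ) (he : e = fun _ => 1)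
    (J : Matrix (Fin n) (Fin n) ℝ) (hJ : J = Matrix.of fun _ _ => 1)
    (Y11 Y12 Y22 : Matrix (Fin n) (Fin n) ℝ)
    (Y : Matrix (Fin n ⊕ Fin n) (Fin n ⊕ Fin n) ℝ)
    (hY : Y = Matrix.fromBlocks Y11 Y12 Y12ᵀ Y22)
    (hYsymm : Y.IsSymm)
    (htr11 : Matrix.trace Y11 = m1) (htr22 : Matrix.trace Y22 = m2)
    (htrJ11 : Matrix.trace (J * Y11) = m1 ^ 2)
    (htrJ22 : Matrix.trace (J * Y22) = m2 ^ 2)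
    (hdiag12 : Y12.diag = 0)
    (htrJ12 : Matrix.trace (J * (Y12 + Y12ᵀ)) = 2 * m1 * m2)
    (hpsd : (Y - vecMulVec Y.diag Y.diag).PosSemidef)
    (hnonneg : ∀ i j, 0 ≤ Y i j)
    (X : Matrix (Fin n) (Fin n) ℝ) (hX : X = Y11) :
    ∀ (i p q : Fin n), p ≠ q →
      (Y (Sum.inl i) (Sum.inr q) + Y (Sum.inr p) (Sum.inr q)
        ≤ Y (Sum.inr q) (Sum.inr q) + Y (Sum.inl i) (Sum.inr p)
       ↔ X i p + X q p ≤ X p p + X i q) := by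
  set M : Matrix (Fin n ⊕ Fin n) (Fin n ⊕ Fin n) ℝ :=
    Y - vecMulVec Y.diag Y.diag with hM
  -- abbreviations for diagonal entries
  set y1 : Fin n → ℝ := fun a => Y (Sum.inl a) (Sum.inl a) with hy1
  set y2 : Fin n → ℝ := fun a => Y (Sum.inr a) (Sum.inr a) with hy2
  have hMapp : ∀ a b, M a b = Y a b - Y.diag a * Y.diag b := by
    intro a b; simp [hM, vecMulVec_apply]
  have hdiagl : ∀ a, Y.diag (Sum.inl a) = y1 a := fun a => rfl
  have hdiagr : ∀ a, Y.diag (Sum.inr a) = y2 a := fun a => rfl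
  have hsym : ∀ a b, Y a b = Y b a := by
    intro a b
    conv_lhs => rw [← hYsymm]
    rfl
  have hz12 : ∀ a, Y (Sum.inl a) (Sum.inr a) = 0 := by
    intro a
    have : Y12.diag a = 0 := by rw [hdiag12]; rfl
    simpa [hY, Matrix.diag] using this
  have hz21 : ∀ a, Y (Sum.inr a) (Sum.inl a) = 0 := by
    intro a; rw [hsym]; exact hz12 a
  -- the test vectors
  set w : Fin n → (Fin n ⊕ Fin n → ℝ) :=
    fun p => Pi.single (Sum.inl p) (1:ℝ) + Pi.single (Sum.inr p) 1 with hw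
  have hmvw : ∀ p a, (M *ᵥ w p) a = M a (Sum.inl p) + M a (Sum.inr p) := by
    intro p a; simp [hw, mulVec_add, mulVec_single]
  have hdw : ∀ p (v : Fin n ⊕ Fin n → ℝ),
      w p ⬝ᵥ v = v (Sum.inl p) + v (Sum.inr p) := by
    intro p v; simp [hw, add_dotProduct, single_dotProduct]
  -- quadratic form value
  have hqf : ∀ p, w p ⬝ᵥ M *ᵥ w p
      = (y1 p + y2 p) - (y1 p + y2 p) ^ 2 := by
    intro p
    rw [hdw, hmvw, hmvw, hMapp, hMapp, hMapp, hMapp, hdiagl, hdiagr,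
      hz12, hz21]
    ring
  have hqfnn : ∀ p, 0 ≤ w p ⬝ᵥ M *ᵥ w p := by
    intro p
    have := hpsd.dotProduct_mulVec_nonneg (w p)
    simpa using this
  have hsnn : ∀ p, 0 ≤ y1 p + y2 p := by
    intro p
    have h1 := hnonneg (Sum.inl p) (Sum.inl p)
    have h2 := hnonneg (Sum.inr p) (Sum.inr p)
    simp only [hy1, hy2]
    linarith
  have hsle : ∀ p, y1 p + y2 p ≤ 1 := by
    intro p
    have h0 := hqfnn p
    rw [hqf] at h0
    nlinarith [hsnn p]
  -- the diagonal sums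
  have hsum1 : ∑ p, y1 p = m1 := by
    have : Matrix.trace Y11 = ∑ p, Y11 p p := rfl
    rw [this] at htr11
    rw [← htr11]
    refine Finset.sum_congr rfl fun p _ => ?_
    simp [hy1, hY]
  have hsum2 : ∑ p, y2 p = m2 := by
    have : Matrix.trace Y22 = ∑ p, Y22 p p := rfl
    rw [this] at htr22
    rw [← htr22]
    refine Finset.sum_congr rfl fun p _ => ?_
    simp [hy2, hY]
  -- each s p equals 1
  have hs1 : ∀ p, y1 p + y2 p = 1 := by
    have hz : ∑ p, (1 - (y1 p + y2 p)) = 0 := by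
      rw [Finset.sum_sub_distrib, Finset.sum_add_distrib, hsum1, hsum2]
      simp [hm]
    have := (Finset.sum_eq_zero_iff_of_nonneg
      (fun p _ => by linarith [hsle p])).mp hz
    intro p
    have := this p (Finset.mem_univ p)
    linarith
  -- null vectors
  have hnull : ∀ p, M *ᵥ w p = 0 := by
    intro p
    have h0 : w p ⬝ᵥ M *ᵥ w p = 0 := by
      rw [hqf, hs1]; ring
    have := (hpsd.dotProduct_mulVec_zero_iff (w p)).mp (by simpa using h0)
    exact this
  -- key identities
  have key : ∀ a b, Y a (Sum.inl b) + Y a (Sum.inr b) = Y.diag a := by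
    intro a b
    have h0 : (M *ᵥ w b) a = 0 := by rw [hnull]; rfl
    rw [hmvw, hMapp, hMapp, hdiagl, hdiagr] at h0
    have hs : Y.diag a * y1 b + Y.diag a * y2 b = Y.diag a := by
      rw [← mul_add, hs1 b, mul_one]
    linarith
  intro i p q hpq
  have hA1 : Y (Sum.inl i) (Sum.inl q) + Y (Sum.inl i) (Sum.inr q)
      = y1 i := key (Sum.inl i) q
  have hA2 : Y (Sum.inl i) (Sum.inl p) + Y (Sum.inl i) (Sum.inr p)
      = y1 i := key (Sum.inl i) p
  have hA3 : Y (Sum.inr p) (Sum.inl q) + Y (Sum.inr p) (Sum.inr q)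
      = y2 p := key (Sum.inr p) q
  have hA4 : Y (Sum.inl q) (Sum.inl p) + Y (Sum.inl q) (Sum.inr p)
      = y1 q := key (Sum.inl q) p
  have hsympq : Y (Sum.inr p) (Sum.inl q) = Y (Sum.inl q) (Sum.inr p) :=
    hsym _ _
  have hXe : ∀ a b, X a b = Y (Sum.inl a) (Sum.inl b) := by
    intro a b; simp [hX, hY]
  have hXpp : X p p = y1 p := hXe p p
  have hsq := hs1 q
  have hsp := hs1 p
  rw [hXe i p, hXe q p, hXe i q, hXpp]
  have hYqp : Y (Sum.inl q) (Sum.inl p) = Y (Sum.inl q) (Sum.inl p) := rfl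
  constructor
  · intro h
    -- express mixed entries via block-1 entries
    have e1 : Y (Sum.inl i) (Sum.inr q) = y1 i - Y (Sum.inl i) (Sum.inl q) := by
      linarith
    have e2 : Y (Sum.inl i) (Sum.inr p) = y1 i - Y (Sum.inl i) (Sum.inl p) := by
      linarith
    have e3 : Y (Sum.inr p) (Sum.inr q)
        = y2 p - (y1 q - Y (Sum.inl q) (Sum.inl p)) := by
      rw [← hA3] at *
      linarith [hsympq, hA4]
    simp only [hy2] at *
    linarith
  · intro h
    simp only [hy2] at *
    linarith [hsympq, hA1, hA2, hA3, hA4, hsq, hsp]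
end

section
/- (Theorem: strengthened equivalence, forward direction.) Let m1 > m2 > 0 with m1 + m2 = n. Let X be feasible for the simplified relaxation (8), with x := diag(X), and suppose X additionally satisfies the triangle inequalities X_{ik} + X_{jk} ≤ X_{kk} + X_{ij} and X_{ii} + X_{jj} + X_{kk} ≤ X_{ij} + X_{ik} + X_{jk} + 1 for all distinct 1 ≤ i, j, k ≤ n. Define Y with blocks Y11 := X, Y12 := x eᵀ − X, Y21 := e xᵀ − X, Y22 := J + X − x eᵀ − e xᵀ. Then Y is feasible for the vector-lifting relaxation (3) and satisfies all boolean quadric polytope inequalities 0 ≤ Y_{ij} ≤ Y_{ii}, Y_{ii} + Y_{jj} ≤ 1 + Y_{ij}, Y_{ik} + Y_{jk} ≤ Y_{kk} + Y_{ij}, and Y_{ii} + Y_{jj} + Y_{kk} ≤ Y_{ij} + Y_{ik} + Y_{jk} + 1 for all distinct indices 1 ≤ i, j, k ≤ 2n. -/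
open Matrix BigOperators

/-- strengthened equivalence, forward direction: If `X` is
feasible for the simplified relaxation (8) and in addition satisfies the triangle
inequalities of the boolean quadric polytope, then the block matrix
`Y = [[X, x eᵀ - X], [e xᵀ - X, J + X - x eᵀ - e xᵀ]]` is feasible for the
vector-lifting relaxation (3) and satisfies all the BQP inequalities
(4)--(7) on all distinct indices of `{1, …, 2n}`. -/
theorem strengthened_equivalence_forward
    (n : ℕ) (hn : 0 < n) (m1 m2 : ℝ)
    (hm : m1 + m2 = n) (h12 : m1 > m2) (h2pos : m2 > 0)
    (e : Fin n → ℝ) (he : e = fun _ => 1)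
    (J : Matrix (Fin n) (Fin n) ℝ) (hJ : J = Matrix.of fun _ _ => 1)
    (X : Matrix (Fin n) (Fin n) ℝ) (hXsymm : X.IsSymm)
    (x : Fin n → ℝ) (hx : x = X.diag)
    (hsum : e ⬝ᵥ x = m1)
    (htrJ : Matrix.trace (J * X) = m1 ^ 2)
    (hrow : X *ᵥ e = m1 • x)
    (hXnn : ∀ i j, 0 ≤ X i j)
    (hslack1 : ∀ i j, 0 ≤ (vecMulVec x e - X) i j)
    (hslack2 : ∀ i j, 0 ≤ (J + X - vecMulVec x e - vecMulVec e x) i j)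
    (hXpsd : X.PosSemidef)
    (htri : ∀ i j k : Fin n, i ≠ j → i ≠ k → j ≠ k →
      X i k + X j k ≤ X k k + X i j ∧
      X i i + X j j + X k k ≤ X i j + X i k + X j k + 1)
    (Y : Matrix (Fin n ⊕ Fin n) (Fin n ⊕ Fin n) ℝ)
    (hY : Y = Matrix.fromBlocks X (vecMulVec x e - X) (vecMulVec e x - X)
      (J + X - vecMulVec x e - vecMulVec e x)) :
    Y.IsSymm ∧
    Matrix.trace X = m1 ∧
    Matrix.trace (J + X - vecMulVec x e - vecMulVec e x) = m2 ∧
    Matrix.trace (J * X) = m1 ^ 2 ∧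
    Matrix.trace (J * (J + X - vecMulVec x e - vecMulVec e x)) = m2 ^ 2 ∧
    (vecMulVec x e - X).diag = 0 ∧
    Matrix.trace (J * ((vecMulVec x e - X) + (vecMulVec x e - X)ᵀ)) = 2 * m1 * m2 ∧
    (Y - vecMulVec Y.diag Y.diag).PosSemidef ∧
    (∀ i j, 0 ≤ Y i j) ∧
    (∀ a b : Fin n ⊕ Fin n, a ≠ b →
      0 ≤ Y a b ∧ Y a b ≤ Y a a ∧ Y a a + Y b b ≤ 1 + Y a b) ∧
    (∀ a b c : Fin n ⊕ Fin n, a ≠ b → a ≠ c → b ≠ c →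
      Y a c + Y b c ≤ Y c c + Y a b ∧
      Y a a + Y b b + Y c c ≤ Y a b + Y a c + Y b c + 1) := by
  subst hJ
  have hm1 : (0:ℝ) < m1 := lt_trans h2pos h12
  have hsym : ∀ p q, X p q = X q p := fun p q => hXsymm.apply q p
  have hdg : ∀ p, x p = X p p := fun p => by rw [hx]; rfl
  have hs1 : ∀ p q, X p q ≤ x p := by
    intro p q
    have h := hslack1 p q
    simp [Matrix.sub_apply, Matrix.vecMulVec_apply, he] at h
    linarith
  have hs2 : ∀ p q, x p + x q ≤ 1 + X p q := by
    intro p q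
    have h := hslack2 p q
    simp [Matrix.sub_apply, Matrix.add_apply, Matrix.vecMulVec_apply, Matrix.of_apply, he] at h
    linarith
  have hxsum : ∑ p, x p = m1 := by simpa [dotProduct, he] using hsum
  have hXrow : ∀ p, ∑ q, X p q = m1 * x p := by
    intro p
    have h := congrFun hrow p
    simpa [Matrix.mulVec, dotProduct, he] using h
  have hcol : ∀ p, ∑ q, X q p = m1 * x p := by
    intro p
    rw [show (∑ q, X q p) = ∑ q, X p q from Finset.sum_congr rfl fun q _ => hsym q p]
    exact hXrow p
  have htrJM : ∀ M : Matrix (Fin n) (Fin n) ℝ,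
      Matrix.trace ((Matrix.of fun _ _ => (1:ℝ)) * M) = ∑ i, ∑ j, M j i := by
    intro M
    simp [Matrix.trace, Matrix.diag, Matrix.mul_apply]
  have tri3 : ∀ i j k : Fin n, i ≠ j → i ≠ k → j ≠ k →
      (X i k + X j k ≤ X k k + X i j) ∧ (X i j + X j k ≤ X j j + X i k) ∧
      (X i j + X i k ≤ X i i + X j k) ∧
      (X i i + X j j + X k k ≤ X i j + X i k + X j k + 1) := by
    intro i j k hij hik hjk
    obtain ⟨t1, t2⟩ := htri i j k hij hik hjk
    obtain ⟨t3, -⟩ := htri i k j hik hij hjk.symm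
    obtain ⟨t4, -⟩ := htri j k i hjk hij.symm hik.symm
    exact ⟨t1, by linarith [hsym k j], by linarith [hsym j i, hsym k i], t2⟩
  have htrX : Matrix.trace X = m1 := by
    have h : ∑ i, X i i = m1 := by
      rw [show (∑ i, X i i) = ∑ i, x i from Finset.sum_congr rfl fun i _ => (hdg i).symm, hxsum]
    simpa [Matrix.trace, Matrix.diag] using h
  -- the PSD part
  have hxv : ∀ v : Fin n → ℝ, (x ⬝ᵥ v) * (x ⬝ᵥ v) ≤ v ⬝ᵥ (X *ᵥ v) := by
    intro v
    have hvXe : v ⬝ᵥ (X *ᵥ e) = m1 * (x ⬝ᵥ v) := by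
      rw [hrow, dotProduct_smul, smul_eq_mul, dotProduct_comm]
    have heXv : e ⬝ᵥ (X *ᵥ v) = m1 * (x ⬝ᵥ v) := by
      rw [Matrix.dotProduct_mulVec]
      have hveq : e ᵥ* X = m1 • x := by rw [← Matrix.mulVec_transpose, hXsymm.eq, hrow]
      rw [hveq, smul_dotProduct, smul_eq_mul]
    have heXe : e ⬝ᵥ (X *ᵥ e) = m1 * m1 := by
      rw [hrow, dotProduct_smul, smul_eq_mul, hsum]
    have hq : ∀ t : ℝ, 0 ≤ (v ⬝ᵥ (X *ᵥ v)) * (t * t) + (2 * (m1 * (x ⬝ᵥ v))) * t + m1 * m1 := by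
      intro t
      have h0 := hXpsd.dotProduct_mulVec_nonneg (t • v + e)
      rw [star_trivial] at h0
      have hexp : (t • v + e) ⬝ᵥ (X *ᵥ (t • v + e)) =
          (v ⬝ᵥ (X *ᵥ v)) * (t * t) + (2 * (m1 * (x ⬝ᵥ v))) * t + m1 * m1 := by
        simp only [Matrix.mulVec_add, Matrix.mulVec_smul, dotProduct_add, add_dotProduct,
          dotProduct_smul, smul_dotProduct, smul_eq_mul, hvXe, heXv, heXe]
        ring
      rw [hexp] at h0
      exact h0
    have hd := discrim_le_zero hq
    rw [discrim] at hd
    nlinarith [hd, mul_pos hm1 hm1]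
  have hMherm : (X - vecMulVec x x)ᴴ = X - vecMulVec x x := by
    ext p q
    simp only [Matrix.conjTranspose_apply, Matrix.sub_apply, Matrix.vecMulVec_apply, star_trivial]
    try (rw [hsym q p]; ring)
  have hMpsd : (X - vecMulVec x x).PosSemidef := by
    refine Matrix.PosSemidef.of_dotProduct_mulVec_nonneg hMherm fun v => ?_
    rw [star_trivial]
    have hmv : (X - vecMulVec x x) *ᵥ v = X *ᵥ v - (x ⬝ᵥ v) • x := by
      rw [Matrix.sub_mulVec]
      congr 1
      funext p
      show ∑ q, vecMulVec x x p q * v q = _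
      simp only [Matrix.vecMulVec_apply, Pi.smul_apply, smul_eq_mul, dotProduct]
      rw [show (∑ q, x p * x q * v q) = ∑ q, (x q * v q) * x p from
        Finset.sum_congr rfl fun q _ => by ring, ← Finset.sum_mul]
      try ring
    rw [hmv, dotProduct_sub, dotProduct_smul, smul_eq_mul]
    have h2 := hxv v
    rw [dotProduct_comm v x]
    linarith
  have hYM : Y - vecMulVec Y.diag Y.diag =
      Matrix.fromBlocks (X - vecMulVec x x) (-(X - vecMulVec x x))
        (-(X - vecMulVec x x)) (X - vecMulVec x x) := by
    subst hY
    ext a b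
    rcases a with i|i <;> rcases b with j|j <;>
      simp [Matrix.diag_apply, Matrix.sub_apply, Matrix.add_apply, Matrix.neg_apply,
        Matrix.vecMulVec_apply, Matrix.of_apply, he, ← hdg] <;>
      ring
  have hfact : (Matrix.fromCols (1 : Matrix (Fin n) (Fin n) ℝ) (-1 : Matrix (Fin n) (Fin n) ℝ))ᴴ *
      (X - vecMulVec x x) * Matrix.fromCols (1 : Matrix (Fin n) (Fin n) ℝ) (-1 : Matrix (Fin n) (Fin n) ℝ) =
      Matrix.fromBlocks (X - vecMulVec x x) (-(X - vecMulVec x x))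
        (-(X - vecMulVec x x)) (X - vecMulVec x x) := by
    rw [Matrix.conjTranspose_fromCols_eq_fromRows_conjTranspose, Matrix.fromRows_mul,
      Matrix.fromRows_mul_fromCols]
    simp
  refine ⟨?_, htrX, ?_, htrJ, ?_, ?_, ?_, ?_, ?_, ?_, ?_⟩
  · -- Y symmetric
    rw [hY]
    apply Matrix.IsSymm.ext
    intro a b
    rcases a with i|i <;> rcases b with j|j <;>
      simp [Matrix.sub_apply, Matrix.add_apply, Matrix.vecMulVec_apply, Matrix.of_apply, he] <;>
      linarith [hsym i j]
  · -- trace of second block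
    rw [Matrix.trace_sub, Matrix.trace_sub, Matrix.trace_add, htrX]
    have hJtr : Matrix.trace ((Matrix.of fun _ _ => (1:ℝ)) : Matrix (Fin n) (Fin n) ℝ) = n := by
      simp [Matrix.trace, Matrix.diag]
    have hCtr : Matrix.trace (vecMulVec x e) = m1 := by
      simp [Matrix.trace, Matrix.diag, Matrix.vecMulVec_apply, he, hxsum]
    have hDtr : Matrix.trace (vecMulVec e x) = m1 := by
      simp [Matrix.trace, Matrix.diag, Matrix.vecMulVec_apply, he, hxsum]
    rw [hJtr, hCtr, hDtr]
    linarith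
  · -- trace J * second block
    rw [htrJM]
    simp only [Matrix.add_apply, Matrix.sub_apply, Matrix.vecMulVec_apply, Matrix.of_apply,
      he, mul_one, one_mul]
    rw [show (∑ i, ∑ j, ((1:ℝ) + X j i - x j - x i)) =
        ∑ i : Fin n, ((n:ℝ) + m1 * x i - m1 - n * x i) from
      Finset.sum_congr rfl fun i _ => by
        rw [Finset.sum_sub_distrib, Finset.sum_sub_distrib, Finset.sum_add_distrib,
          Finset.sum_const, Finset.sum_const, Finset.card_univ, Fintype.card_fin,
          hcol i, hxsum, nsmul_eq_mul, nsmul_eq_mul]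
        try push_cast
        try ring]
    rw [Finset.sum_sub_distrib, Finset.sum_sub_distrib, Finset.sum_add_distrib,
      Finset.sum_const, Finset.sum_const, Finset.card_univ, Fintype.card_fin,
      ← Finset.mul_sum, ← Finset.mul_sum, hxsum, nsmul_eq_mul, nsmul_eq_mul]
    rw [← hm]; ring
  · -- diag of slack
    funext p
    simp [Matrix.diag_apply, Matrix.sub_apply, Matrix.vecMulVec_apply, he, ← hdg]
  · -- trace J * (A + Aᵀ)
    rw [htrJM]
    simp only [Matrix.add_apply, Matrix.transpose_apply, Matrix.sub_apply,
      Matrix.vecMulVec_apply, he, mul_one, one_mul]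
    rw [show (∑ i, ∑ j, ((x j - X j i) + (x i - X i j))) =
        ∑ i : Fin n, (m1 - m1 * x i + ((n:ℝ) * x i - m1 * x i)) from
      Finset.sum_congr rfl fun i _ => by
        rw [Finset.sum_add_distrib, Finset.sum_sub_distrib, Finset.sum_sub_distrib,
          Finset.sum_const, Finset.card_univ, Fintype.card_fin, hcol i, hXrow i,
          hxsum, nsmul_eq_mul]
        try push_cast
        try ring]
    rw [Finset.sum_add_distrib, Finset.sum_sub_distrib, Finset.sum_sub_distrib,
      Finset.sum_const, Finset.card_univ, Fintype.card_fin,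
      ← Finset.mul_sum, ← Finset.mul_sum, hxsum, nsmul_eq_mul]
    rw [← hm]; ring
  · -- PSD
    rw [hYM]
    have h := hMpsd.conjTranspose_mul_mul_same (Matrix.fromCols (1 : Matrix (Fin n) (Fin n) ℝ) (-1 : Matrix (Fin n) (Fin n) ℝ))
    rwa [hfact] at h
  · -- entrywise nonneg
    intro a b
    rcases a with i|i <;> rcases b with j|j <;>
      simp [hY, he, Matrix.vecMulVec_apply] <;>
      linarith [hXnn i j, hs1 i j, hs1 j i, hsym i j, hs2 i j]
  · -- pair inequalities
    intro a b hab
    rcases a with i|i <;> rcases b with j|j <;>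
      simp [hY, he, Matrix.vecMulVec_apply] <;>
      refine ⟨?_, ?_, ?_⟩ <;>
      linarith [hXnn i j, hs1 i j, hs1 j i, hs2 i j, hsym i j, hdg i, hdg j]
  · -- triangle inequalities
    intro a b c hab hac hbc
    rcases a with i|i <;> rcases b with j|j <;> rcases c with k|k <;> simp [hY, he, Matrix.vecMulVec_apply]
    · have hij : i ≠ j := fun h => hab (by rw [h])
      have hik : i ≠ k := fun h => hac (by rw [h])
      have hjk : j ≠ k := fun h => hbc (by rw [h])
      obtain ⟨t1, t2, t3, t4⟩ := tri3 i j k hij hik hjk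
      constructor <;> linarith [hdg i, hdg j, hdg k]
    · have hij : i ≠ j := fun h => hab (by rw [h])
      rcases eq_or_ne k i with hki | hki
      all_goals try rw [hki]
      · constructor <;> linarith [hs1 i j, hs1 j i, hs1 i k, hs1 k i, hs1 j k, hs1 k j,
          hs2 i j, hs2 i k, hs2 j k, hXnn i j, hXnn i k, hXnn j k,
          hsym i j, hsym i k, hsym j k, hdg i, hdg j, hdg k]
      · rcases eq_or_ne k j with hkj | hkj
        all_goals try rw [hkj]
        · constructor <;> linarith [hs1 i j, hs1 j i, hs1 i k, hs1 k i, hs1 j k, hs1 k j,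
            hs2 i j, hs2 i k, hs2 j k, hXnn i j, hXnn i k, hXnn j k,
            hsym i j, hsym i k, hsym j k, hdg i, hdg j, hdg k]
        · obtain ⟨t1, t2, t3, t4⟩ := tri3 i j k hij hki.symm hkj.symm
          constructor <;> linarith [hs1 i j, hs1 j i, hs1 i k, hs1 k i, hs1 j k, hs1 k j,
            hs2 i j, hs2 i k, hs2 j k, hXnn i j, hXnn i k, hXnn j k,
            hsym i j, hsym i k, hsym j k, hdg i, hdg j, hdg k]
    · have hik : i ≠ k := fun h => hac (by rw [h])
      rcases eq_or_ne j i with hji | hji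
      all_goals try rw [hji]
      · constructor <;> linarith [hs1 i j, hs1 j i, hs1 i k, hs1 k i, hs1 j k, hs1 k j,
          hs2 i j, hs2 i k, hs2 j k, hXnn i j, hXnn i k, hXnn j k,
          hsym i j, hsym i k, hsym j k, hdg i, hdg j, hdg k]
      · rcases eq_or_ne j k with hjk | hjk
        all_goals try rw [hjk]
        · constructor <;> linarith [hs1 i j, hs1 j i, hs1 i k, hs1 k i, hs1 j k, hs1 k j,
            hs2 i j, hs2 i k, hs2 j k, hXnn i j, hXnn i k, hXnn j k,
            hsym i j, hsym i k, hsym j k, hdg i, hdg j, hdg k]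
        · obtain ⟨t1, t2, t3, t4⟩ := tri3 i j k hji.symm hik hjk
          constructor <;> linarith [hs1 i j, hs1 j i, hs1 i k, hs1 k i, hs1 j k, hs1 k j,
            hs2 i j, hs2 i k, hs2 j k, hXnn i j, hXnn i k, hXnn j k,
            hsym i j, hsym i k, hsym j k, hdg i, hdg j, hdg k]
    · have hjk : j ≠ k := fun h => hbc (by rw [h])
      rcases eq_or_ne i j with hij | hij
      all_goals try rw [hij]
      · constructor <;> linarith [hs1 i j, hs1 j i, hs1 i k, hs1 k i, hs1 j k, hs1 k j,
          hs2 i j, hs2 i k, hs2 j k, hXnn i j, hXnn i k, hXnn j k,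
          hsym i j, hsym i k, hsym j k, hdg i, hdg j, hdg k]
      · rcases eq_or_ne i k with hik | hik
        all_goals try rw [hik]
        · constructor <;> linarith [hs1 i j, hs1 j i, hs1 i k, hs1 k i, hs1 j k, hs1 k j,
            hs2 i j, hs2 i k, hs2 j k, hXnn i j, hXnn i k, hXnn j k,
            hsym i j, hsym i k, hsym j k, hdg i, hdg j, hdg k]
        · obtain ⟨t1, t2, t3, t4⟩ := tri3 i j k hij hik hjk
          constructor <;> linarith [hs1 i j, hs1 j i, hs1 i k, hs1 k i, hs1 j k, hs1 k j,
            hs2 i j, hs2 i k, hs2 j k, hXnn i j, hXnn i k, hXnn j k,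
            hsym i j, hsym i k, hsym j k, hdg i, hdg j, hdg k]
    · have hjk : j ≠ k := fun h => hbc (by rw [h])
      rcases eq_or_ne i j with hij | hij
      all_goals try rw [hij]
      · constructor <;> linarith [hs1 i j, hs1 j i, hs1 i k, hs1 k i, hs1 j k, hs1 k j,
          hs2 i j, hs2 i k, hs2 j k, hXnn i j, hXnn i k, hXnn j k,
          hsym i j, hsym i k, hsym j k, hdg i, hdg j, hdg k]
      · rcases eq_or_ne i k with hik | hik
        all_goals try rw [hik]
        · constructor <;> linarith [hs1 i j, hs1 j i, hs1 i k, hs1 k i, hs1 j k, hs1 k j,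
            hs2 i j, hs2 i k, hs2 j k, hXnn i j, hXnn i k, hXnn j k,
            hsym i j, hsym i k, hsym j k, hdg i, hdg j, hdg k]
        · obtain ⟨t1, t2, t3, t4⟩ := tri3 i j k hij hik hjk
          constructor <;> linarith [hs1 i j, hs1 j i, hs1 i k, hs1 k i, hs1 j k, hs1 k j,
            hs2 i j, hs2 i k, hs2 j k, hXnn i j, hXnn i k, hXnn j k,
            hsym i j, hsym i k, hsym j k, hdg i, hdg j, hdg k]
    · have hik : i ≠ k := fun h => hac (by rw [h])
      rcases eq_or_ne j i with hji | hji
      all_goals try rw [hji]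
      · constructor <;> linarith [hs1 i j, hs1 j i, hs1 i k, hs1 k i, hs1 j k, hs1 k j,
          hs2 i j, hs2 i k, hs2 j k, hXnn i j, hXnn i k, hXnn j k,
          hsym i j, hsym i k, hsym j k, hdg i, hdg j, hdg k]
      · rcases eq_or_ne j k with hjk | hjk
        all_goals try rw [hjk]
        · constructor <;> linarith [hs1 i j, hs1 j i, hs1 i k, hs1 k i, hs1 j k, hs1 k j,
            hs2 i j, hs2 i k, hs2 j k, hXnn i j, hXnn i k, hXnn j k,
            hsym i j, hsym i k, hsym j k, hdg i, hdg j, hdg k]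
        · obtain ⟨t1, t2, t3, t4⟩ := tri3 i j k hji.symm hik hjk
          constructor <;> linarith [hs1 i j, hs1 j i, hs1 i k, hs1 k i, hs1 j k, hs1 k j,
            hs2 i j, hs2 i k, hs2 j k, hXnn i j, hXnn i k, hXnn j k,
            hsym i j, hsym i k, hsym j k, hdg i, hdg j, hdg k]
    · have hij : i ≠ j := fun h => hab (by rw [h])
      rcases eq_or_ne k i with hki | hki
      all_goals try rw [hki]
      · constructor <;> linarith [hs1 i j, hs1 j i, hs1 i k, hs1 k i, hs1 j k, hs1 k j,
          hs2 i j, hs2 i k, hs2 j k, hXnn i j, hXnn i k, hXnn j k,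
          hsym i j, hsym i k, hsym j k, hdg i, hdg j, hdg k]
      · rcases eq_or_ne k j with hkj | hkj
        all_goals try rw [hkj]
        · constructor <;> linarith [hs1 i j, hs1 j i, hs1 i k, hs1 k i, hs1 j k, hs1 k j,
            hs2 i j, hs2 i k, hs2 j k, hXnn i j, hXnn i k, hXnn j k,
            hsym i j, hsym i k, hsym j k, hdg i, hdg j, hdg k]
        · obtain ⟨t1, t2, t3, t4⟩ := tri3 i j k hij hki.symm hkj.symm
          constructor <;> linarith [hs1 i j, hs1 j i, hs1 i k, hs1 k i, hs1 j k, hs1 k j,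
            hs2 i j, hs2 i k, hs2 j k, hXnn i j, hXnn i k, hXnn j k,
            hsym i j, hsym i k, hsym j k, hdg i, hdg j, hdg k]
    · have hij : i ≠ j := fun h => hab (by rw [h])
      have hik : i ≠ k := fun h => hac (by rw [h])
      have hjk : j ≠ k := fun h => hbc (by rw [h])
      obtain ⟨t1, t2, t3, t4⟩ := tri3 i j k hij hik hjk
      constructor <;> linarith [hsym i j, hsym i k, hsym j k, hdg i, hdg j, hdg k,
        hXnn i j, hXnn i k, hXnn j k]
end

section
/- (Theorem: strengthened equivalence, converse direction.) Let m1 > m2 > 0 with m1 + m2 = n. Let Y be feasible for the vector-lifting relaxation (3) and suppose Y satisfies the boolean quadric polytope inequalities Y_{ik} + Y_{jk} ≤ Y_{kk} + Y_{ij} and Y_{ii} + Y_{jj} + Y_{kk} ≤ Y_{ij} + Y_{ik} + Y_{jk} + 1 for all distinct indices 1 ≤ i, j, k ≤ 2n. Then X := Y11 is feasible for the simplified relaxation (8) and satisfies the triangle inequalities X_{ik} + X_{jk} ≤ X_{kk} + X_{ij} and X_{ii} + X_{jj} + X_{kk} ≤ X_{ij} + X_{ik} + X_{jk} + 1 for all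 distinct 1 ≤ i, j, k ≤ n; moreover Y11 + Y22 = 2X + J − x eᵀ − e xᵀ with x := diag(X), so the objective values coincide. -/
open Matrix BigOperators

private lemma vmv_aux {m : Type*} [Fintype m] (a b w : m → ℝ) :
    vecMulVec a b *ᵥ w = (b ⬝ᵥ w) • a := by
  funext i
  simp only [vecMulVec_apply, mulVec, dotProduct, Pi.smul_apply, smul_eq_mul]
  rw [Finset.sum_mul]
  exact Finset.sum_congr rfl fun j _ => by ring

/-- strengthened equivalence, converse direction: If `Y` is
feasible for the vector-lifting relaxation (3) and satisfies the BQP triangle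
inequalities on all distinct indices of `{1, …, 2n}`, then `X := Y11` is feasible
for the simplified relaxation (8), satisfies the corresponding triangle
inequalities on `{1, …, n}`, and `Y11 + Y22 = 2X + J - x eᵀ - e xᵀ`, so the
objective values coincide. -/
theorem strengthened_equivalence_converse
    (n : ℕ) (hn : 0 < n) (m1 m2 : ℝ)
    (hm : m1 + m2 = n) (h12 : m1 > m2) (h2pos : m2 > 0)
    (e : Fin n → ℝ) (he : e = fun _ => 1)
    (J : Matrix (Fin n) (Fin n) ℝ) (hJ : J = Matrix.of fun _ _ => 1)
    (Y11 Y12 Y22 : Matrix (Fin n) (Fin n) ℝ)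
    (Y : Matrix (Fin n ⊕ Fin n) (Fin n ⊕ Fin n) ℝ)
    (hY : Y = Matrix.fromBlocks Y11 Y12 Y12ᵀ Y22)
    (hYsymm : Y.IsSymm)
    (htr11 : Matrix.trace Y11 = m1) (htr22 : Matrix.trace Y22 = m2)
    (htrJ11 : Matrix.trace (J * Y11) = m1 ^ 2)
    (htrJ22 : Matrix.trace (J * Y22) = m2 ^ 2)
    (hdiag12 : Y12.diag = 0)
    (htrJ12 : Matrix.trace (J * (Y12 + Y12ᵀ)) = 2 * m1 * m2)
    (hpsd : (Y - vecMulVec Y.diag Y.diag).PosSemidef)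
    (hnonneg : ∀ i j, 0 ≤ Y i j)
    (htriY : ∀ a b c : Fin n ⊕ Fin n, a ≠ b → a ≠ c → b ≠ c →
      Y a c + Y b c ≤ Y c c + Y a b ∧
      Y a a + Y b b + Y c c ≤ Y a b + Y a c + Y b c + 1)
    (X : Matrix (Fin n) (Fin n) ℝ) (hX : X = Y11)
    (x : Fin n → ℝ) (hx : x = Y11.diag) :
    X.IsSymm ∧
    e ⬝ᵥ x = m1 ∧
    Matrix.trace (J * X) = m1 ^ 2 ∧
    X *ᵥ e = m1 • x ∧
    (∀ i j, 0 ≤ X i j) ∧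
    (∀ i j, 0 ≤ (vecMulVec x e - X) i j) ∧
    (∀ i j, 0 ≤ (J + X - vecMulVec x e - vecMulVec e x) i j) ∧
    X.PosSemidef ∧
    (∀ i j k : Fin n, i ≠ j → i ≠ k → j ≠ k →
      X i k + X j k ≤ X k k + X i j ∧
      X i i + X j j + X k k ≤ X i j + X i k + X j k + 1) ∧
    Y11 + Y22 = (2 : ℝ) • X + J - vecMulVec x e - vecMulVec e x := by
  subst hX hx hY he hJ
  -- entrywise symmetry of the blocks
  have hsym : ∀ i j, X i j = X j i := by
    intro i j
    have h := hYsymm.apply (Sum.inl i) (Sum.inl j)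
    simpa using h.symm
  have hsym22 : ∀ i j, Y22 i j = Y22 j i := by
    intro i j
    have h := hYsymm.apply (Sum.inr i) (Sum.inr j)
    simpa using h.symm
  have hd12 : ∀ i, Y12 i i = 0 := by
    intro i; have := congrFun hdiag12 i; simpa [Matrix.diag] using this
  -- nonnegativity of the blocks
  have hN11 : ∀ i j, 0 ≤ X i j := fun i j => by
    simpa using hnonneg (Sum.inl i) (Sum.inl j)
  have hN12 : ∀ i j, 0 ≤ Y12 i j := fun i j => by
    simpa using hnonneg (Sum.inl i) (Sum.inr j)
  have hN22 : ∀ i j, 0 ≤ Y22 i j := fun i j => by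
    simpa using hnonneg (Sum.inr i) (Sum.inr j)
  -- traces as sums
  have hs1 : ∑ i, X i i = m1 := by
    simpa [Matrix.trace, Matrix.diag] using htr11
  have hs2 : ∑ i, Y22 i i = m2 := by
    simpa [Matrix.trace, Matrix.diag] using htr22
  have hS11 : ∑ i, ∑ j, X i j = m1 ^ 2 := by
    rw [← htrJ11, Matrix.trace]
    simp only [Matrix.diag, Matrix.mul_apply, Matrix.of_apply, one_mul]
    exact Finset.sum_comm
  -- rule out n = 1
  have hn2 : 2 ≤ n := by
    by_contra h
    push_neg at h
    have hn1 : n = 1 := by omega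
    subst hn1
    have h1 : X 0 0 = m1 := by simpa using hs1
    have h2 : X 0 0 = m1 ^ 2 := by simpa using hS11
    have hm' : m1 + m2 = 1 := by simpa using hm
    nlinarith
  have : Nontrivial (Fin n) := Fin.nontrivial_iff_two_le.mpr hn2
  -- diagonal identity y1 + y2 = 1
  have hle : ∀ i, X i i + Y22 i i ≤ 1 := by
    intro i
    obtain ⟨j, hj⟩ := exists_ne i
    obtain ⟨t1, t2⟩ := htriY (Sum.inl i) (Sum.inr i) (Sum.inl j)
      (by simp) (by simp [Ne.symm hj]) (by simp)
    simp only [fromBlocks_apply₁₁, fromBlocks_apply₁₂, fromBlocks_apply₂₁,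
      fromBlocks_apply₂₂, transpose_apply, hd12 i] at t1 t2
    linarith
  have heq : ∀ i, X i i + Y22 i i = 1 := by
    have hsum : ∑ i, (X i i + Y22 i i) = ∑ _i : Fin n, (1 : ℝ) := by
      rw [Finset.sum_add_distrib, hs1, hs2]
      simp [hm]
    intro i
    exact (Finset.sum_eq_sum_iff_of_le (fun i _ => hle i)).mp hsum i (Finset.mem_univ i)
  -- the two equality families from the BQP inequalities
  have F5 : ∀ i j, i ≠ j → X i j + Y12 i j = X i i := by
    intro i j hij
    obtain ⟨t1, t2⟩ := htriY (Sum.inl j) (Sum.inr j) (Sum.inl i)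
      (by simp) (by simp [Ne.symm hij]) (by simp)
    simp only [fromBlocks_apply₁₁, fromBlocks_apply₁₂, fromBlocks_apply₂₁,
      fromBlocks_apply₂₂, transpose_apply, hd12 j] at t1 t2
    have hq := heq j
    have hs := hsym i j
    linarith
  have F6 : ∀ i j, i ≠ j → Y12 i j + Y22 i j = Y22 j j := by
    intro i j hij
    obtain ⟨t1, t2⟩ := htriY (Sum.inl i) (Sum.inr i) (Sum.inr j)
      (by simp) (by simp) (by simp [hij])
    simp only [fromBlocks_apply₁₁, fromBlocks_apply₁₂, fromBlocks_apply₂₁,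
      fromBlocks_apply₂₂, transpose_apply, hd12 i] at t1 t2
    have hq := heq i
    linarith
  have key : ∀ i j, Y22 i j = 1 + X i j - X i i - X j j := by
    intro i j
    by_cases hij : i = j
    · subst hij; have := heq i; linarith
    · have h5 := F5 i j hij
      have h6 := F6 i j hij
      have hqj := heq j
      linarith
  -- kernel argument : row sums
  set d : Fin n ⊕ Fin n → ℝ := (fromBlocks X Y12 Y12ᵀ Y22).diag with hd
  have hdv : d ⬝ᵥ Sum.elim (fun _ : Fin n => (1:ℝ)) 0 = m1 := by
    simp [hd, dotProduct, Fintype.sum_sum_type, Matrix.diag, hs1]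
  have hq0 : star (Sum.elim (fun _ : Fin n => (1:ℝ)) 0) ⬝ᵥ
      ((fromBlocks X Y12 Y12ᵀ Y22 - vecMulVec d d) *ᵥ
        Sum.elim (fun _ : Fin n => (1:ℝ)) 0) = 0 := by
    rw [star_trivial, sub_mulVec, dotProduct_sub, vmv_aux, dotProduct_smul, hdv,
      fromBlocks_mulVec]
    simp only [Sum.elim_comp_inl, Sum.elim_comp_inr, mulVec_zero, add_zero,
      sumElim_dotProduct_sumElim, zero_dotProduct, dotProduct_zero, smul_eq_mul]
    have h1 : (fun _ : Fin n => (1:ℝ)) ⬝ᵥ (X *ᵥ fun _ => (1:ℝ)) = m1 ^ 2 := by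
      simp [dotProduct, mulVec, hS11]
    have h2 : (Sum.elim (fun _ : Fin n => (1:ℝ)) 0) ⬝ᵥ d = m1 := by
      rw [dotProduct_comm]; exact hdv
    rw [h1, h2]
    ring
  have hker := (hpsd.dotProduct_mulVec_zero_iff _).mp hq0
  have hrow : ∀ i, ∑ j, X i j = m1 * X i i := by
    intro i
    have h := congrFun hker (Sum.inl i)
    rw [sub_mulVec, fromBlocks_mulVec, vmv_aux, hdv] at h
    simp only [Sum.elim_comp_inl, Sum.elim_comp_inr, Pi.sub_apply, Sum.elim_inl,
      Pi.add_apply, Pi.smul_apply, smul_eq_mul, mulVec_zero, Pi.zero_apply,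
      add_zero] at h
    have hdl : d (Sum.inl i) = X i i := by simp [hd, Matrix.diag]
    have hmv : (X *ᵥ fun _ => (1:ℝ)) i = ∑ j, X i j := by
      simp [mulVec, dotProduct]
    rw [hdl, hmv] at h
    linarith
  -- positive semidefiniteness of X
  have hpsdX : X.PosSemidef := by
    refine Matrix.PosSemidef.of_dotProduct_mulVec_nonneg ?_ ?_
    · ext i j
      simp only [conjTranspose_apply, star_trivial]
      exact hsym j i
    · intro w
      have h := hpsd.dotProduct_mulVec_nonneg (Sum.elim w 0)
      rw [star_trivial, sub_mulVec, dotProduct_sub, vmv_aux,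
        fromBlocks_mulVec, dotProduct_smul] at h
      simp only [Sum.elim_comp_inl, Sum.elim_comp_inr, mulVec_zero, add_zero,
        sumElim_dotProduct_sumElim, zero_dotProduct, dotProduct_zero,
        smul_eq_mul] at h
      have hdw : d ⬝ᵥ Sum.elim w 0 = X.diag ⬝ᵥ w := by
        simp [hd, dotProduct, Fintype.sum_sum_type, Matrix.diag]
      have hwd : Sum.elim w 0 ⬝ᵥ d = X.diag ⬝ᵥ w := by
        rw [dotProduct_comm]; exact hdw
      rw [hdw, hwd] at h
      rw [star_trivial]
      nlinarith [sq_nonneg (X.diag ⬝ᵥ w)]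
  refine ⟨?_, ?_, htrJ11, ?_, hN11, ?_, ?_, hpsdX, ?_, ?_⟩
  · ext i j
    exact hsym j i
  · simp [dotProduct, Matrix.diag, hs1]
  · funext i
    have := hrow i
    simp only [mulVec, dotProduct, mul_one, Pi.smul_apply, smul_eq_mul, Matrix.diag]
    simpa using this
  · intro i j
    by_cases hij : i = j
    · subst hij; simp [vecMulVec_apply, Matrix.diag]
    · have h5 := F5 i j hij
      have h12' := hN12 i j
      simp only [Matrix.sub_apply, vecMulVec_apply, Matrix.diag, mul_one]
      linarith
  · intro i j
    have hk := key i j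
    have h22 := hN22 i j
    simp only [Matrix.sub_apply, Matrix.add_apply, vecMulVec_apply, Matrix.diag,
      Matrix.of_apply, mul_one, one_mul]
    linarith
  · intro i j k hij hik hjk
    obtain ⟨t1, t2⟩ := htriY (Sum.inl i) (Sum.inl j) (Sum.inl k)
      (by simp [hij]) (by simp [hik]) (by simp [hjk])
    simp only [fromBlocks_apply₁₁] at t1 t2
    exact ⟨t1, t2⟩
  · ext i j
    have hk := key i j
    simp only [Matrix.add_apply, Matrix.sub_apply, Matrix.smul_apply, smul_eq_mul,
      vecMulVec_apply, Matrix.diag, Matrix.of_apply, mul_one, one_mul]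
    linarith
end
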